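/- arXiv:1411.6332 — 9 statements merged into one kernel-verified Lean document; each statement's English description precedes it below -/
import Mathlib

section
/- For every q ∈ [1,∞) there exists a positive constant C_q such that for all t ≥ 0, ‖∂_x w(t,·)‖_{L^q(ℝ)} ≤ C_q (1+t)^{−1+1/q} and ‖∂_x² w(t,·)‖_{L^q(ℝ)} ≤ C_q (1+t)^{−1}. Moreover there exists a positive constant C such that for all t ≥ 0, sup_{x∈ℝ} |∂_x w(t,x)| ≤ C(1+t)^{−1} and sup_{x∈ℝ} |∂_x² w(t,x)| ≤ C(1+t)^{−1}. -/
/-!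
Along characteristics `∂ₓw = w₀'(Y) / (1 + t w₀'(Y))`, which lies between `0` and
`(‖w₀'‖∞ + 1) / (1 + t)`; since `w₀'' = -2 tanh · w₀'`, also `|∂ₓ²w| ≤ 2 ∂ₓw`. As `w` is monotone
with values in `[w₋, w₊]`, `‖∂ₓw‖₁ ≤ w₊ - w₋`; as `∂ₓw` increases up to the point where `Y = 0` and
decreases afterwards, `‖∂ₓ²w‖₁ ≤ 2 ‖∂ₓw‖∞`. The `Lᵠ` bounds follow from
`‖f‖_q ≤ ‖f‖_∞ ^ (1 - 1/q) ‖f‖₁ ^ (1/q)`.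
-/

open Real MeasureTheory Filter Set

/-- The smooth monotone initial datum `w₀(x) = (w₋+w₊)/2 + ((w₊−w₋)/2)·tanh x`. -/
noncomputable def w0 (wm wp x : ℝ) : ℝ := (wm + wp) / 2 + ((wp - wm) / 2) * Real.tanh x

theorem eLpNorm_le_of_norm_le_of_lintegral_le {α E : Type*} [MeasurableSpace α]
    [NormedAddCommGroup E] {μ : Measure α} {f : α → E} {M I q : ℝ} (hM : 0 ≤ M) (hI : 0 ≤ I)
    (hq : 1 ≤ q) (hfM : ∀ x, ‖f x‖ ≤ M) (hfI : ∫⁻ x, ‖f x‖ₑ ∂μ ≤ ENNReal.ofReal I) :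
    eLpNorm f (ENNReal.ofReal q) μ ≤ ENNReal.ofReal (M ^ (1 - 1 / q) * I ^ (1 / q)) := by
  have hq0 : 0 < q := by linarith
  have hpointwise : ∀ x, ‖f x‖ₑ ^ q ≤ ENNReal.ofReal M ^ (q - 1) * ‖f x‖ₑ := fun x => by
    calc ‖f x‖ₑ ^ q = ‖f x‖ₑ ^ (q - 1) * ‖f x‖ₑ ^ (1 : ℝ) := by
          rw [← ENNReal.rpow_add_of_nonneg _ _ (by linarith) zero_le_one, sub_add_cancel]
      _ ≤ ENNReal.ofReal M ^ (q - 1) * ‖f x‖ₑ := by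
          rw [ENNReal.rpow_one, ← ofReal_norm]
          gcongr
          exact hfM x
  have hintegral : ∫⁻ x, ‖f x‖ₑ ^ q ∂μ ≤ ENNReal.ofReal M ^ (q - 1) * ENNReal.ofReal I :=
    calc ∫⁻ x, ‖f x‖ₑ ^ q ∂μ ≤ ∫⁻ x, ENNReal.ofReal M ^ (q - 1) * ‖f x‖ₑ ∂μ :=
          lintegral_mono hpointwise
      _ = ENNReal.ofReal M ^ (q - 1) * ∫⁻ x, ‖f x‖ₑ ∂μ :=
          lintegral_const_mul' _ _
            (ENNReal.rpow_ne_top_of_nonneg (by linarith) ENNReal.ofReal_ne_top)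
      _ ≤ ENNReal.ofReal M ^ (q - 1) * ENNReal.ofReal I := by gcongr
  rw [eLpNorm_eq_lintegral_rpow_enorm_toReal (by simpa using hq0) ENNReal.ofReal_ne_top,
    ENNReal.toReal_ofReal hq0.le, ENNReal.ofReal_mul (by positivity),
    ← ENNReal.ofReal_rpow_of_nonneg hM (by rw [sub_nonneg, div_le_one hq0]; exact hq),
    ← ENNReal.ofReal_rpow_of_nonneg hI (by positivity),
    show 1 - 1 / q = (q - 1) * (1 / q) by field_simp, ENNReal.rpow_mul,
    ← ENNReal.mul_rpow_of_nonneg _ _ (by positivity)]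
  gcongr

theorem lintegral_enorm_le_of_forall_intervalIntegral_le {E : Type*} [NormedAddCommGroup E]
    {f : ℝ → E} (hf : Continuous f) (c I : ℝ)
    (h : ∀ n : ℕ, ∫ x in c - n..c + n, ‖f x‖ ≤ I) : ∫⁻ x, ‖f x‖ₑ ≤ ENNReal.ofReal I := by
  have hcover : AECover volume atTop fun n : ℕ => Ioc (c - n) (c + n) :=
    aecover_Ioc (tendsto_atBot_add_const_left _ _ (tendsto_neg_atTop_atBot.comp
      tendsto_natCast_atTop_atTop)) (tendsto_atTop_add_const_left _ _ tendsto_natCast_atTop_atTop)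
  refine le_of_tendsto' (hcover.lintegral_tendsto_of_nat hf.enorm.aemeasurable) fun n => ?_
  rw [← ofReal_integral_norm_eq_lintegral_enorm (hf.integrableOn_Icc.mono_set Ioc_subset_Icc_self),
    ← intervalIntegral.integral_of_le (by linarith [n.cast_nonneg (α := ℝ)])]
  exact ENNReal.ofReal_le_ofReal (h n)

section DerivativeL1

variable {g g' : ℝ → ℝ} (hg : ∀ x, HasDerivAt g (g' x) x) (hg' : Continuous g')
include hg hg'

theorem lintegral_enorm_le_sub_of_hasDerivAt_of_nonneg {m M : ℝ} (hpos : ∀ x, 0 ≤ g' x)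
    (hm : ∀ x, m ≤ g x) (hM : ∀ x, g x ≤ M) : ∫⁻ x, ‖g' x‖ₑ ≤ ENNReal.ofReal (M - m) := by
  refine lintegral_enorm_le_of_forall_intervalIntegral_le hg' 0 _ fun n => ?_
  simp_rw [Real.norm_of_nonneg (hpos _)]
  rw [intervalIntegral.integral_eq_sub_of_hasDerivAt (fun x _ => hg x) (hg'.intervalIntegrable _ _)]
  linarith [hm (0 - n), hM (0 + n)]

theorem lintegral_enorm_le_two_mul_of_hasDerivAt_of_unimodal {c : ℝ} (hg0 : ∀ x, 0 ≤ g x)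
    (hleft : ∀ x ≤ c, 0 ≤ g' x) (hright : ∀ x, c ≤ x → g' x ≤ 0) :
    ∫⁻ x, ‖g' x‖ₑ ≤ ENNReal.ofReal (2 * g c) := by
  refine lintegral_enorm_le_of_forall_intervalIntegral_le hg' c _ fun n => ?_
  have hn : (0 : ℝ) ≤ n := n.cast_nonneg
  have hFTC (a b : ℝ) : ∫ x in a..b, g' x = g b - g a :=
    intervalIntegral.integral_eq_sub_of_hasDerivAt (fun x _ => hg x) (hg'.intervalIntegrable _ _)
  have hrise : ∫ x in c - n..c, ‖g' x‖ = g c - g (c - n) := by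
    rw [← hFTC]
    refine intervalIntegral.integral_congr fun x hx => Real.norm_of_nonneg (hleft x ?_)
    rw [uIcc_of_le (by linarith)] at hx
    exact hx.2
  have hfall : ∫ x in c..c + n, ‖g' x‖ = g c - g (c + n) := by
    rw [← neg_sub, ← hFTC, ← intervalIntegral.integral_neg]
    refine intervalIntegral.integral_congr fun x hx => Real.norm_of_nonpos (hright x ?_)
    rw [uIcc_of_le (by linarith)] at hx
    exact hx.1
  rw [← intervalIntegral.integral_add_adjacent_intervals (hg'.norm.intervalIntegrable _ _)
    (hg'.norm.intervalIntegrable _ _), hrise, hfall]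
  linarith [hg0 (c - n), hg0 (c + n)]

end DerivativeL1

theorem Real.hasDerivAt_tanh (x : ℝ) : HasDerivAt tanh (1 - tanh x ^ 2) x := by
  have hcosh := (cosh_pos x).ne'
  rw [show tanh = sinh / cosh from funext tanh_eq_sinh_div_cosh]
  refine ((hasDerivAt_sinh x).div (hasDerivAt_cosh x) hcosh).congr_deriv ?_
  simp only [Pi.div_apply]
  field_simp

@[fun_prop]
theorem Real.continuous_tanh : Continuous tanh :=
  continuous_iff_continuousAt.2 fun x => (hasDerivAt_tanh x).continuousAt

theorem Real.strictMono_tanh : StrictMono tanh :=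
  strictMono_of_hasDerivAt_pos hasDerivAt_tanh fun x => by nlinarith [tanh_sq_lt_one x]

section InverseOfIdAddMul

variable {f f' Y : ℝ → ℝ} {t : ℝ} (hf : ∀ y, HasDerivAt f (f' y) y) (hf' : ∀ y, 0 ≤ f' y)
  (ht : 0 ≤ t) (hY : ∀ x, Y x + t * f (Y x) = x)
include hf hf' ht

theorem strictMono_id_add_mul : StrictMono fun y => y + t * f y :=
  strictMono_id.add_monotone ((monotone_of_hasDerivAt_nonneg hf hf').const_mul ht)

include hY

theorem apply_add_mul_of_inverse (y : ℝ) : Y (y + t * f y) = y :=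
  (strictMono_id_add_mul hf hf' ht).injective (hY _)

theorem monotone_of_inverse : Monotone Y :=
  fun x₁ x₂ h => (strictMono_id_add_mul hf hf' ht).le_iff_le.mp (by simpa only [hY] using h)

theorem lipschitzWith_one_of_inverse : LipschitzWith 1 Y := by
  have hfm := monotone_of_hasDerivAt_nonneg hf hf'
  refine LipschitzWith.of_dist_le_mul fun x₁ x₂ => ?_
  simp only [NNReal.coe_one, one_mul, Real.dist_eq]
  wlog h : x₁ ≤ x₂ generalizing x₁ x₂
  · rw [abs_sub_comm, abs_sub_comm x₁]; exact this _ _ (le_of_not_ge h)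
  have hYle := monotone_of_inverse hf hf' ht hY h
  have hfle : t * f (Y x₁) ≤ t * f (Y x₂) := mul_le_mul_of_nonneg_left (hfm hYle) ht
  rw [abs_of_nonpos (by linarith), abs_of_nonpos (by linarith)]
  linarith [hY x₁, hY x₂]

theorem hasDerivAt_comp_of_inverse {h h' : ℝ → ℝ} (hh : ∀ y, HasDerivAt h (h' y) y) (x : ℝ) :
    HasDerivAt (fun x => h (Y x)) (h' (Y x) / (1 + t * f' (Y x))) x := by
  have hF : HasDerivAt (fun y => y + t * f y) (1 + t * f' (Y x)) (Y x) :=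
    (hasDerivAt_id _).add ((hf _).const_mul t)
  have hYx := hF.of_local_left_inverse
    (lipschitzWith_one_of_inverse hf hf' ht hY).continuous.continuousAt
    (by nlinarith [hf' (Y x)]) (Eventually.of_forall hY)
  simpa only [div_eq_mul_inv, mul_comm] using! (hh (Y x)).comp x hYx

end InverseOfIdAddMul

noncomputable def dw0 (wm wp y : ℝ) : ℝ := (wp - wm) / 2 * (1 - tanh y ^ 2)

-- If `Y t` inverts `y ↦ y + t * w0 wm wp y`, then `∂ₓw(t, x) = wx wm wp t (Y t x)` and
-- `∂ₓ²w(t, x) = dwx wm wp t (Y t x) / (1 + t * dw0 wm wp (Y t x))`.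
noncomputable def wx (wm wp t y : ℝ) : ℝ := dw0 wm wp y / (1 + t * dw0 wm wp y)

noncomputable def dwx (wm wp t y : ℝ) : ℝ :=
  -2 * tanh y * wx wm wp t y / (1 + t * dw0 wm wp y)

section Profile

variable {wm wp t : ℝ}

theorem hasDerivAt_w0 (wm wp y : ℝ) : HasDerivAt (w0 wm wp) (dw0 wm wp y) y :=
  ((hasDerivAt_tanh y).const_mul _).const_add _

theorem hasDerivAt_dw0 (wm wp y : ℝ) : HasDerivAt (dw0 wm wp) (-2 * tanh y * dw0 wm wp y) y := by
  refine ((((hasDerivAt_tanh y).pow 2).const_sub 1).const_mul _).congr_deriv ?_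
  unfold dw0; ring

@[fun_prop]
theorem continuous_dw0 (wm wp : ℝ) : Continuous (dw0 wm wp) := by
  unfold dw0; fun_prop

variable (hw : wm ≤ wp)
include hw

theorem w0_mem_Icc (y : ℝ) : w0 wm wp y ∈ Icc wm wp := by
  have := abs_tanh_lt_one y
  rw [abs_lt] at this
  constructor <;> unfold w0 <;> nlinarith

theorem dw0_nonneg (y : ℝ) : 0 ≤ dw0 wm wp y := by
  have := tanh_sq_lt_one y
  unfold dw0; nlinarith

theorem dw0_le (y : ℝ) : dw0 wm wp y ≤ (wp - wm) / 2 := by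
  have := sq_nonneg (tanh y)
  unfold dw0; nlinarith

variable (ht : 0 ≤ t)
include ht

theorem one_le_one_add_mul_dw0 (y : ℝ) : 1 ≤ 1 + t * dw0 wm wp y := by
  nlinarith [dw0_nonneg hw y]

theorem wx_nonneg (y : ℝ) : 0 ≤ wx wm wp t y :=
  div_nonneg (dw0_nonneg hw y) (by linarith [one_le_one_add_mul_dw0 hw ht y])

theorem wx_le (y : ℝ) : wx wm wp t y ≤ ((wp - wm) / 2 + 1) / (1 + t) := by
  have hs := dw0_nonneg hw y
  have hsa := dw0_le hw y
  rw [wx, div_le_div_iff₀ (by linarith [one_le_one_add_mul_dw0 hw ht y]) (by linarith)]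
  nlinarith [mul_nonneg ht hs]

theorem hasDerivAt_wx (y : ℝ) : HasDerivAt (wx wm wp t) (dwx wm wp t y) y := by
  have hD := one_le_one_add_mul_dw0 hw ht y
  refine ((hasDerivAt_dw0 wm wp y).div (((hasDerivAt_dw0 wm wp y).const_mul t).const_add 1)
    (by linarith)).congr_deriv ?_
  unfold dwx wx
  field_simp
  ring

theorem abs_dwx_div_le (y : ℝ) :
    |dwx wm wp t y / (1 + t * dw0 wm wp y)| ≤ 2 * (((wp - wm) / 2 + 1) / (1 + t)) := by
  have hD := one_le_one_add_mul_dw0 hw ht y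
  have hwx := wx_nonneg hw ht y
  have hD2 : 0 < (1 + t * dw0 wm wp y) * (1 + t * dw0 wm wp y) := by nlinarith
  calc |dwx wm wp t y / (1 + t * dw0 wm wp y)|
      = 2 * |tanh y| * wx wm wp t y / ((1 + t * dw0 wm wp y) * (1 + t * dw0 wm wp y)) := by
        rw [dwx, div_div, abs_div, abs_of_pos hD2, abs_mul,
          abs_mul, abs_neg, abs_two, abs_of_nonneg hwx]
    _ ≤ 2 * 1 * wx wm wp t y / (1 * 1) := by
        gcongr
        exact (abs_tanh_lt_one y).le
    _ ≤ 2 * (((wp - wm) / 2 + 1) / (1 + t)) := by linarith [wx_le hw ht y]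

theorem dwx_div_nonneg {y : ℝ} (hy : y ≤ 0) :
    0 ≤ dwx wm wp t y / (1 + t * dw0 wm wp y) := by
  have hD := one_le_one_add_mul_dw0 hw ht y
  have htanh : tanh y ≤ 0 := by simpa using strictMono_tanh.monotone hy
  unfold dwx
  have := wx_nonneg hw ht y
  apply div_nonneg (div_nonneg ?_ (by linarith)) (by linarith)
  nlinarith

theorem dwx_div_nonpos {y : ℝ} (hy : 0 ≤ y) :
    dwx wm wp t y / (1 + t * dw0 wm wp y) ≤ 0 := by
  have hD := one_le_one_add_mul_dw0 hw ht y
  have htanh : 0 ≤ tanh y := by simpa using strictMono_tanh.monotone hy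
  unfold dwx
  have := wx_nonneg hw ht y
  apply div_nonpos_of_nonpos_of_nonneg (div_nonpos_of_nonpos_of_nonneg ?_ (by linarith))
    (by linarith)
  nlinarith

theorem continuous_wx : Continuous (wx wm wp t) :=
  continuous_iff_continuousAt.2 fun y => (hasDerivAt_wx hw ht y).continuousAt

theorem continuous_dwx_div : Continuous fun y => dwx wm wp t y / (1 + t * dw0 wm wp y) := by
  have hwx := continuous_wx hw ht
  have hD (y : ℝ) : 1 + t * dw0 wm wp y ≠ 0 := by linarith [one_le_one_add_mul_dw0 hw ht y]
  unfold dwx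
  exact Continuous.div (Continuous.div (by fun_prop) (by fun_prop) hD) (by fun_prop) hD

end Profile

section Rarefaction

variable {wm wp t : ℝ} {Y : ℝ → ℝ} (hw : wm ≤ wp) (ht : 0 ≤ t)
  (hY : ∀ x, Y x + t * w0 wm wp (Y x) = x)
include hw ht hY

theorem hasDerivAt_w0_comp (x : ℝ) :
    HasDerivAt (fun x => w0 wm wp (Y x)) (wx wm wp t (Y x)) x :=
  hasDerivAt_comp_of_inverse (hasDerivAt_w0 wm wp) (dw0_nonneg hw) ht hY (hasDerivAt_w0 wm wp) x

theorem hasDerivAt_wx_comp (x : ℝ) : HasDerivAt (fun x => wx wm wp t (Y x))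
    (dwx wm wp t (Y x) / (1 + t * dw0 wm wp (Y x))) x :=
  hasDerivAt_comp_of_inverse (hasDerivAt_w0 wm wp) (dw0_nonneg hw) ht hY (hasDerivAt_wx hw ht) x

theorem lintegral_wx_comp_le : ∫⁻ x, ‖wx wm wp t (Y x)‖ₑ ≤ ENNReal.ofReal (wp - wm) :=
  lintegral_enorm_le_sub_of_hasDerivAt_of_nonneg (hasDerivAt_w0_comp hw ht hY)
    ((continuous_wx hw ht).comp (lipschitzWith_one_of_inverse (hasDerivAt_w0 wm wp)
      (dw0_nonneg hw) ht hY).continuous)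
    (fun _ => wx_nonneg hw ht _) (fun _ => (w0_mem_Icc hw _).1) (fun _ => (w0_mem_Icc hw _).2)

theorem lintegral_dwx_div_comp_le :
    ∫⁻ x, ‖dwx wm wp t (Y x) / (1 + t * dw0 wm wp (Y x))‖ₑ
      ≤ ENNReal.ofReal (2 * (((wp - wm) / 2 + 1) / (1 + t))) := by
  have hYmono := monotone_of_inverse (hasDerivAt_w0 wm wp) (dw0_nonneg hw) ht hY
  have hYc : Y (t * w0 wm wp 0) = 0 := by
    simpa using apply_add_mul_of_inverse (hasDerivAt_w0 wm wp) (dw0_nonneg hw) ht hY 0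
  refine (lintegral_enorm_le_two_mul_of_hasDerivAt_of_unimodal (hasDerivAt_wx_comp hw ht hY)
    ((continuous_dwx_div hw ht).comp (lipschitzWith_one_of_inverse (hasDerivAt_w0 wm wp)
      (dw0_nonneg hw) ht hY).continuous) (fun _ => wx_nonneg hw ht _) (c := t * w0 wm wp 0)
    (fun x hx => dwx_div_nonneg hw ht (hYc ▸ hYmono hx))
    (fun x hx => dwx_div_nonpos hw ht (hYc ▸ hYmono hx))).trans ?_
  exact ENNReal.ofReal_le_ofReal (by linarith [wx_le hw ht (Y (t * w0 wm wp 0))])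

theorem deriv_w0_comp : deriv (fun x => w0 wm wp (Y x)) = fun x => wx wm wp t (Y x) :=
  funext fun x => (hasDerivAt_w0_comp hw ht hY x).deriv

theorem deriv_deriv_w0_comp : deriv (deriv fun x => w0 wm wp (Y x))
    = fun x => dwx wm wp t (Y x) / (1 + t * dw0 wm wp (Y x)) := by
  rw [deriv_w0_comp hw ht hY]
  exact funext fun x => (hasDerivAt_wx_comp hw ht hY x).deriv

theorem abs_deriv_w0_comp_le (x : ℝ) :
    |deriv (fun x => w0 wm wp (Y x)) x| ≤ ((wp - wm) / 2 + 1) * (1 + t) ^ (-(1 : ℝ)) := by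
  rw [deriv_w0_comp hw ht hY, abs_of_nonneg (wx_nonneg hw ht _), rpow_neg_one, ← div_eq_mul_inv]
  exact wx_le hw ht _

theorem abs_deriv_deriv_w0_comp_le (x : ℝ) :
    |deriv (deriv fun x => w0 wm wp (Y x)) x|
      ≤ 2 * ((wp - wm) / 2 + 1) * (1 + t) ^ (-(1 : ℝ)) := by
  rw [deriv_deriv_w0_comp hw ht hY, rpow_neg_one, ← div_eq_mul_inv, mul_div_assoc]
  exact abs_dwx_div_le hw ht _

theorem eLpNorm_deriv_w0_comp_le {q : ℝ} (hq : 1 ≤ q) :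
    eLpNorm (deriv fun x => w0 wm wp (Y x)) (ENNReal.ofReal q) volume ≤ ENNReal.ofReal
      (((wp - wm) / 2 + 1) ^ (1 - 1 / q) * (wp - wm) ^ (1 / q) * (1 + t) ^ (-1 + 1 / q)) := by
  have h1t : 0 < 1 + t := by linarith
  have hbound (x : ℝ) : ‖wx wm wp t (Y x)‖ ≤ ((wp - wm) / 2 + 1) / (1 + t) := by
    rw [Real.norm_of_nonneg (wx_nonneg hw ht _)]
    exact wx_le hw ht _
  rw [deriv_w0_comp hw ht hY]
  refine (eLpNorm_le_of_norm_le_of_lintegral_le (by positivity) (by linarith) hq hbound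
    (lintegral_wx_comp_le hw ht hY)).trans_eq ?_
  rw [div_rpow (by linarith) h1t.le, div_mul_eq_mul_div, div_eq_mul_inv, ← rpow_neg h1t.le,
    neg_sub, neg_add_eq_sub]

theorem eLpNorm_deriv_deriv_w0_comp_le {q : ℝ} (hq : 1 ≤ q) :
    eLpNorm (deriv (deriv fun x => w0 wm wp (Y x))) (ENNReal.ofReal q) volume
      ≤ ENNReal.ofReal (2 * ((wp - wm) / 2 + 1) * (1 + t) ^ (-(1 : ℝ))) := by
  have hM : 0 ≤ 2 * (((wp - wm) / 2 + 1) / (1 + t)) := by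
    have : 0 ≤ wp - wm := by linarith
    have : 0 < 1 + t := by linarith
    positivity
  rw [deriv_deriv_w0_comp hw ht hY, rpow_neg_one, ← div_eq_mul_inv, mul_div_assoc]
  refine (eLpNorm_le_of_norm_le_of_lintegral_le hM hM hq (fun _ => abs_dwx_div_le hw ht _)
    (lintegral_dwx_div_comp_le hw ht hY)).trans_eq ?_
  rw [← rpow_add' hM (by norm_num), sub_add_cancel, rpow_one]

end Rarefaction

theorem stmt_2 (wm wp : ℝ) (hw : wm < wp) (Y : ℝ → ℝ → ℝ)
    (hY : ∀ t x : ℝ, 0 ≤ t → Y t x + t * w0 wm wp (Y t x) = x) :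
    (∀ q : ℝ, 1 ≤ q → ∃ C : ℝ, 0 < C ∧ ∀ t : ℝ, 0 ≤ t →
      eLpNorm (fun x => deriv (fun y => w0 wm wp (Y t y)) x) (ENNReal.ofReal q) volume
        ≤ ENNReal.ofReal (C * (1 + t) ^ (-1 + 1/q)) ∧
      eLpNorm (fun x => deriv (deriv (fun y => w0 wm wp (Y t y))) x) (ENNReal.ofReal q) volume
        ≤ ENNReal.ofReal (C * (1 + t) ^ (-(1:ℝ)))) ∧
    (∃ C : ℝ, 0 < C ∧ ∀ t : ℝ, 0 ≤ t → ∀ x : ℝ,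
      |deriv (fun y => w0 wm wp (Y t y)) x| ≤ C * (1 + t) ^ (-(1:ℝ)) ∧
      |deriv (deriv (fun y => w0 wm wp (Y t y))) x| ≤ C * (1 + t) ^ (-(1:ℝ))) := by
  set K := (wp - wm) / 2 + 1 with hK_def
  have hK : 0 < K := by rw [hK_def]; linarith
  have hW : 0 ≤ wp - wm := by linarith
  refine ⟨fun q hq => ⟨K ^ (1 - 1 / q) * (wp - wm) ^ (1 / q) + 2 * K, by positivity,
    fun t ht => ⟨?_, ?_⟩⟩, ⟨2 * K, by positivity, fun t ht x => ⟨?_, ?_⟩⟩⟩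
  · refine (eLpNorm_deriv_w0_comp_le hw.le ht (hY t · ht) hq).trans
      (ENNReal.ofReal_le_ofReal ?_)
    gcongr
    linarith
  · refine (eLpNorm_deriv_deriv_w0_comp_le hw.le ht (hY t · ht) hq).trans
      (ENNReal.ofReal_le_ofReal ?_)
    gcongr
    linarith [mul_nonneg (rpow_nonneg hK.le (1 - 1 / q)) (rpow_nonneg hW (1 / q))]
  · refine (abs_deriv_w0_comp_le hw.le ht (hY t · ht) x).trans ?_
    gcongr
    linarith
  · exact abs_deriv_deriv_w0_comp_le hw.le ht (hY t · ht) x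
end

section
/- lim_{t→∞} sup_{x∈ℝ} |w(t,x) − w^r(x/t)| = 0, where w^r is the rarefaction-wave solution of the Riemann problem for the inviscid Burgers equation. -/
open Real MeasureTheory Filter Set

lemma tanh_add_one_le (y : ℝ) : Real.tanh y + 1 ≤ 2 * Real.exp (2*y) := by
  have ha := Real.exp_pos y
  have hb := Real.exp_pos (-y)
  have hab : Real.exp y * Real.exp (-y) = 1 := by rw [← Real.exp_add]; simp
  have h2 : Real.exp (2*y) = Real.exp y * Real.exp y := by rw [← Real.exp_add]; ring_nf
  have hab0 : Real.exp y + Real.exp (-y) > 0 := by linarith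
  have htanh : Real.tanh y = (Real.exp y - Real.exp (-y)) / (Real.exp y + Real.exp (-y)) := by
    rw [Real.tanh_eq_sinh_div_cosh, Real.sinh_eq, Real.cosh_eq]
    field_simp
  rw [htanh, h2, div_add' _ _ _ (ne_of_gt hab0), div_le_iff₀ hab0]
  nlinarith [sq_nonneg (Real.exp y), mul_pos ha ha, mul_pos (mul_pos ha ha) ha]

lemma one_sub_tanh_le (y : ℝ) : 1 - Real.tanh y ≤ 2 * Real.exp (-(2*y)) := by
  have h := tanh_add_one_le (-y)
  rw [Real.tanh_neg] at h
  have h2 : 2 * (-y) = -(2*y) := by ring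
  rw [h2] at h
  linarith


lemma tanh_lt_one' (y : ℝ) : Real.tanh y < 1 := by
  have ha := Real.exp_pos y
  have hb := Real.exp_pos (-y)
  have hab0 : Real.exp y + Real.exp (-y) > 0 := by linarith
  have htanh : Real.tanh y = (Real.exp y - Real.exp (-y)) / (Real.exp y + Real.exp (-y)) := by
    rw [Real.tanh_eq_sinh_div_cosh, Real.sinh_eq, Real.cosh_eq]
    field_simp
  rw [htanh, div_lt_one hab0]
  linarith

lemma neg_one_lt_tanh' (y : ℝ) : -1 < Real.tanh y := by
  have h := tanh_lt_one' (-y)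
  rw [Real.tanh_neg] at h
  linarith

/-- The rarefaction wave `w^r(x/t)` of the Riemann problem for the inviscid Burgers
equation with far field states `w₋ < w₊`, written as a function of `(t, x)`. -/
noncomputable def burgersRarefaction (wm wp t x : ℝ) : ℝ :=
  if x ≤ wm * t then wm else if wp * t ≤ x then wp else x / t

theorem stmt_3 (wm wp : ℝ) (hw : wm < wp) (Y : ℝ → ℝ → ℝ)
    (hY : ∀ t x : ℝ, 0 ≤ t → Y t x + t * w0 wm wp (Y t x) = x) :
    ∀ ε : ℝ, 0 < ε → ∃ T : ℝ, 0 < T ∧ ∀ t : ℝ, T ≤ t → ∀ x : ℝ,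
      |w0 wm wp (Y t x) - burgersRarefaction wm wp t x| ≤ ε := by
  intro ε hε
  set c : ℝ := wp - wm with hc
  have hcpos : 0 < c := by simp [hc]; linarith
  refine ⟨max 1 (Real.log (c / ε) / (2 * ε)), lt_of_lt_of_le one_pos (le_max_left _ _), ?_⟩
  intro t ht x
  have ht1 : (1 : ℝ) ≤ t := le_trans (le_max_left _ _) ht
  have htpos : 0 < t := lt_of_lt_of_le one_pos ht1
  have hkey : c * Real.exp (-(2 * t * ε)) ≤ ε := by
    have hlog : Real.log (c / ε) ≤ 2 * t * ε := by
      have h1 : Real.log (c / ε) / (2 * ε) ≤ t := le_trans (le_max_right _ _) ht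
      have h2 : 0 < 2 * ε := by linarith
      calc Real.log (c / ε) = Real.log (c / ε) / (2 * ε) * (2 * ε) := by field_simp
        _ ≤ t * (2 * ε) := by exact mul_le_mul_of_nonneg_right h1 (le_of_lt h2)
        _ = 2 * t * ε := by ring
    have h3 : Real.exp (-(2 * t * ε)) ≤ Real.exp (-(Real.log (c / ε))) :=
      Real.exp_le_exp.mpr (by linarith)
    have h4 : Real.exp (-(Real.log (c / ε))) = ε / c := by
      rw [Real.exp_neg, Real.exp_log (div_pos hcpos hε)]
      field_simp
    calc c * Real.exp (-(2 * t * ε)) ≤ c * (ε / c) := by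
          rw [← h4]; exact mul_le_mul_of_nonneg_left h3 (le_of_lt hcpos)
      _ = ε := by field_simp
  set y : ℝ := Y t x with hy
  have hx : y + t * w0 wm wp y = x := hY t x (le_of_lt htpos)
  set w : ℝ := w0 wm wp y with hwdef
  have htanh1 : -1 < Real.tanh y := neg_one_lt_tanh' y
  have htanh2 : Real.tanh y < 1 := tanh_lt_one' y
  have hwl : wm < w := by
    rw [hwdef, w0]; nlinarith
  have hwu : w < wp := by
    rw [hwdef, w0]; nlinarith
  have hlow : w - wm ≤ c * Real.exp (2 * y) := by
    have h := tanh_add_one_le y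
    rw [hwdef, w0]; nlinarith
  have hhigh : wp - w ≤ c * Real.exp (-(2 * y)) := by
    have h := one_sub_tanh_le y
    rw [hwdef, w0]; nlinarith
  rw [burgersRarefaction]
  split_ifs with h1 h2
  · -- x ≤ wm * t, goal |w - wm| ≤ ε
    rw [abs_sub_le_iff]
    constructor
    · by_contra hcon
      push_neg at hcon
      have hYneg : y ≤ -(t * ε) := by nlinarith
      have : c * Real.exp (2 * y) ≤ c * Real.exp (-(2 * t * ε)) := by
        apply mul_le_mul_of_nonneg_left _ (le_of_lt hcpos)
        exact Real.exp_le_exp.mpr (by linarith)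
      linarith
    · linarith
  · -- wp * t ≤ x, goal |w - wp| ≤ ε
    rw [abs_sub_le_iff]
    constructor
    · linarith
    · by_contra hcon
      push_neg at hcon
      have hYpos : t * ε ≤ y := by nlinarith
      have : c * Real.exp (-(2 * y)) ≤ c * Real.exp (-(2 * t * ε)) := by
        apply mul_le_mul_of_nonneg_left _ (le_of_lt hcpos)
        exact Real.exp_le_exp.mpr (by linarith)
      linarith
  · -- middle: wm * t < x < wp * t
    push_neg at h1
    have h2' : x < wp * t := by push_neg at h2; exact h2
    have hww : w - x / t = -(y / t) := by
      field_simp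
      linarith [hx]
    rw [hww, abs_neg, abs_div, abs_of_pos htpos, div_le_iff₀ htpos]
    rw [abs_le]
    constructor
    · by_contra hcon
      push_neg at hcon
      have hYneg : y < -(ε * t) := by linarith
      -- then x = y + t w < -εt + t w, and x > wm t ⇒ w - wm > ε
      have hwm : w - wm > ε := by nlinarith
      have : c * Real.exp (2 * y) ≤ c * Real.exp (-(2 * t * ε)) := by
        apply mul_le_mul_of_nonneg_left _ (le_of_lt hcpos)
        exact Real.exp_le_exp.mpr (by nlinarith)
      linarith
    · by_contra hcon
      push_neg at hcon
      have hYpos : ε * t < y := hcon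
      have hwp : wp - w > ε := by nlinarith
      have : c * Real.exp (-(2 * y)) ≤ c * Real.exp (-(2 * t * ε)) := by
        apply mul_le_mul_of_nonneg_left _ (le_of_lt hcpos)
        exact Real.exp_le_exp.mpr (by nlinarith)
      linarith
end

section
/- U^r is a C² function on [0,∞)×ℝ which solves the Cauchy problem ∂_t U^r + ∂_x(f(U^r)) = 0 for t > 0, x ∈ ℝ, with initial data U^r(0,x) = λ^{−1}((λ₋+λ₊)/2 + ((λ₊−λ₋)/2)·tanh x) and far-field limits lim_{x→±∞} U^r(t,x) = u_± for each t ≥ 0. Moreover, for all t ≥ 0 and x ∈ ℝ one has u₋ < U^r(t,x) < u₊ and ∂_x U^r(t,x) > 0. -/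
open Real MeasureTheory Filter Set

/-!
For `t ≥ 0` the characteristic map `y ↦ y + t w₀(y)` is strictly increasing, and the implicit
function theorem makes its inverse `Y(t, x)` jointly as smooth as `w₀`, up to `t = 0`.
Differentiating `Y + t w₀(Y) = x` gives `∂ₜY = -w₀(Y) ∂ₓY` and `∂ₓY = 1 / (1 + t w₀'(Y)) > 0`,
so `φ ∘ Y` solves `∂ₜv + w₀(Y) ∂ₓv = 0` for every differentiable `φ`. For `φ = λ⁻¹ ∘ w₀`, which
is smooth by the inverse function theorem since `λ' = f'' > 0`, this is the conservation law,
because `f'(U^r) = w₀(Y)`. The far-field limits hold because `x - Y(t, x) = t w₀(Y)` is bounded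
and `λ⁻¹`, the inverse of a monotone map, is continuous up to the endpoints of `[λ₋, λ₊]`.
-/

open Topology

namespace Real

theorem hasDerivAt_tanh_s4 (x : ℝ) : HasDerivAt tanh (cosh x ^ 2)⁻¹ x := by
  have := (hasDerivAt_sinh x).div (hasDerivAt_cosh x) (cosh_pos x).ne'
  rw [← sq, ← sq, cosh_sq_sub_sinh_sq, one_div] at this
  exact this.congr_of_eventuallyEq (.of_forall tanh_eq_sinh_div_cosh)

theorem contDiff_tanh {n : WithTop ℕ∞} : ContDiff ℝ n tanh := by
  rw [show tanh = fun x => sinh x / cosh x from funext tanh_eq_sinh_div_cosh]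
  exact contDiff_sinh.div contDiff_cosh fun x => (cosh_pos x).ne'

theorem tanh_eq_one_sub_two_div (x : ℝ) : tanh x = 1 - 2 / (exp (2 * x) + 1) := by
  have h : exp (2 * x) = exp x ^ 2 := by rw [← exp_nat_mul]; norm_num
  rw [tanh_eq, exp_neg, h]
  field_simp
  ring

theorem tendsto_tanh_atTop : Tendsto tanh atTop (𝓝 1) := by
  have h : Tendsto (fun x : ℝ => exp (2 * x) + 1) atTop atTop :=
    tendsto_atTop_add_const_right _ 1 (tendsto_exp_atTop.comp (tendsto_id.const_mul_atTop two_pos))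
  rw [funext tanh_eq_one_sub_two_div]
  simpa [div_eq_mul_inv] using (h.inv_tendsto_atTop.const_mul 2).const_sub 1

theorem tendsto_tanh_atBot : Tendsto tanh atBot (𝓝 (-1)) := by
  simpa [Function.comp_def] using (tendsto_tanh_atTop.comp tendsto_neg_atBot_atTop).neg

end Real

section W0

variable {wm wp : ℝ}

theorem contDiff_w0 {n : WithTop ℕ∞} : ContDiff ℝ n (w0 wm wp) :=
  contDiff_const.add (contDiff_const.mul contDiff_tanh)

theorem hasDerivAt_w0_s4 (x : ℝ) : HasDerivAt (w0 wm wp) ((wp - wm) / 2 * (cosh x ^ 2)⁻¹) x :=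
  ((hasDerivAt_tanh_s4 x).const_mul _).const_add _

theorem deriv_w0_pos (h : wm < wp) (x : ℝ) : 0 < deriv (w0 wm wp) x := by
  rw [(hasDerivAt_w0_s4 x).deriv]
  have := sub_pos.2 h
  positivity

theorem strictMono_w0 (h : wm < wp) : StrictMono (w0 wm wp) :=
  strictMono_of_deriv_pos (deriv_w0_pos h)

theorem w0_mem_Ioo (h : wm < wp) (x : ℝ) : w0 wm wp x ∈ Ioo wm wp := by
  have := neg_one_lt_tanh x
  have := tanh_lt_one x
  constructor <;> unfold w0 <;> nlinarith

theorem tendsto_w0_atTop : Tendsto (w0 wm wp) atTop (𝓝 wp) := by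
  have h := (tendsto_tanh_atTop.const_mul ((wp - wm) / 2)).const_add ((wm + wp) / 2)
  rwa [show (wm + wp) / 2 + (wp - wm) / 2 * 1 = wp by ring] at h

theorem tendsto_w0_atBot : Tendsto (w0 wm wp) atBot (𝓝 wm) := by
  have h := (tendsto_tanh_atBot.const_mul ((wp - wm) / 2)).const_add ((wm + wp) / 2)
  rwa [show (wm + wp) / 2 + (wp - wm) / 2 * -1 = wm by ring] at h

end W0

theorem contDiffWithinAt_of_locally_unique_solution {E : Type*} [NormedAddCommGroup E]
    [NormedSpace ℝ E] [CompleteSpace E] {n : WithTop ℕ∞} {F : E × ℝ → ℝ} {h : E → ℝ} {s : Set E}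
    {p₀ : E} {c : ℝ} (hF : ContDiffAt ℝ n F (p₀, h p₀)) (hn : n ≠ 0)
    (hFy : HasDerivAt (fun y => F (p₀, y)) c (h p₀)) (hc : c ≠ 0)
    (huniq : ∀ᶠ q in 𝓝[s ×ˢ univ] (p₀, h p₀), F q = F (p₀, h p₀) → h q.1 = q.2) :
    ContDiffWithinAt ℝ n h s p₀ := by
  have hinr : fderiv ℝ F (p₀, h p₀) ∘L .inr ℝ E ℝ = .toSpanSingleton ℝ c :=
    ((hF.differentiableAt hn).hasFDerivAt.comp (h p₀)
      (hasFDerivAt_prodMk_right p₀ (h p₀))).unique hFy.hasFDerivAt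
  have hinv : (fderiv ℝ F (p₀, h p₀) ∘L .inr ℝ E ℝ).IsInvertible := by
    rw [hinr]
    exact ⟨.unitsEquivAut ℝ (Units.mk0 c hc), by ext; simp⟩
  set ψ := hF.implicitFunction hn hinv
  have hψ : ψ p₀ = h p₀ := hF.implicitFunction_apply_self hn hinv
  have hgraph : Tendsto (fun p => (p, ψ p)) (𝓝[s] p₀) (𝓝[s ×ˢ univ] (p₀, h p₀)) := by
    refine tendsto_nhdsWithin_iff.2 ⟨?_, eventually_mem_nhdsWithin.mono fun p hp => ⟨hp, trivial⟩⟩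
    rw [← hψ]
    exact (continuousAt_id.prodMk (hF.contDiffAt_implicitFunction hn hinv).continuousAt
      ).tendsto.mono_left nhdsWithin_le_nhds
  refine (hF.contDiffAt_implicitFunction hn hinv).contDiffWithinAt.congr_of_eventuallyEq ?_ hψ.symm
  filter_upwards [hgraph.eventually huniq,
    nhdsWithin_le_nhds (hF.eventually_apply_implicitFunction hn hinv)] with p hp hFp
  exact hp hFp

section Characteristics

variable {g : ℝ → ℝ} {t : ℝ}

theorem one_add_mul_deriv_pos (hmono : Monotone g) (ht : 0 ≤ t) (y : ℝ) :
    0 < 1 + t * deriv g y :=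
  add_pos_of_pos_of_nonneg one_pos (mul_nonneg ht hmono.deriv_nonneg)

theorem hasDerivAt_add_mul {y : ℝ} (hg : DifferentiableAt ℝ g y) :
    HasDerivAt (fun y => y + t * g y) (1 + t * deriv g y) y :=
  (hasDerivAt_id y).add (hg.hasDerivAt.const_mul t)

/-- `Y t x` is the foot of the characteristic through `(t, x)` of `∂ₜw + w ∂ₓw = 0`,
`w(0, ·) = g`. -/
def IsCharacteristicFoot (g : ℝ → ℝ) (Y : ℝ → ℝ → ℝ) : Prop :=
  ∀ t x : ℝ, 0 ≤ t → Y t x + t * g (Y t x) = x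

namespace IsCharacteristicFoot

variable {Y : ℝ → ℝ → ℝ} {x y : ℝ}

theorem eq_of_add_mul_eq (hY : IsCharacteristicFoot g Y) (hmono : Monotone g) (ht : 0 ≤ t)
    (h : y + t * g y = x) : Y t x = y :=
  (strictMono_id.add_monotone (hmono.const_mul ht)).injective ((hY t x ht).trans h.symm)

theorem contDiffOn {n : WithTop ℕ∞} (hY : IsCharacteristicFoot g Y) (hg : ContDiff ℝ n g)
    (hn : n ≠ 0) (hmono : Monotone g) :
    ContDiffOn ℝ n (fun q : ℝ × ℝ => Y q.1 q.2) (Ici 0 ×ˢ univ) := by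
  rintro q ⟨hq, -⟩
  refine contDiffWithinAt_of_locally_unique_solution
    (F := fun p : (ℝ × ℝ) × ℝ => p.2 + p.1.1 * g p.2 - p.1.2) (by fun_prop) hn
    ((hasDerivAt_add_mul (t := q.1) (hg.differentiable hn (Y q.1 q.2))).sub_const q.2)
    (one_add_mul_deriv_pos hmono hq _).ne' ?_
  filter_upwards [self_mem_nhdsWithin] with p ⟨⟨hp, _⟩, _⟩ hFp
  rw [hY q.1 q.2 hq, sub_self, sub_eq_zero] at hFp
  exact hY.eq_of_add_mul_eq hmono hp hFp

theorem hasDerivAt_space (hY : IsCharacteristicFoot g Y) (hg : ContDiff ℝ 1 g)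
    (hmono : Monotone g) (ht : 0 ≤ t) (x : ℝ) :
    HasDerivAt (Y t) (1 + t * deriv g (Y t x))⁻¹ x := by
  have hstrict : HasStrictDerivAt (fun y => y + t * g y) (1 + t * deriv g (Y t x)) (Y t x) :=
    (contDiff_id.add (contDiff_const.mul hg)).contDiffAt.hasStrictDerivAt'
      (hasDerivAt_add_mul (hg.differentiable one_ne_zero _)) one_ne_zero
  have := (hstrict.to_local_left_inverse (one_add_mul_deriv_pos hmono ht _).ne'
    (.of_forall fun y => hY.eq_of_add_mul_eq hmono ht rfl)).hasDerivAt
  rwa [hY t x ht] at this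

theorem hasDerivAt_time (hY : IsCharacteristicFoot g Y) (hg : ContDiff ℝ 1 g)
    (hmono : Monotone g) (ht : 0 < t) (x : ℝ) :
    HasDerivAt (fun s => Y s x) (-g (Y t x) * (1 + t * deriv g (Y t x))⁻¹) t := by
  have hdiff : DifferentiableAt ℝ (fun s => Y s x) t :=
    (((hY.contDiffOn hg one_ne_zero hmono).contDiffAt
      (prod_mem_nhds (Ici_mem_nhds ht) univ_mem)).differentiableAt one_ne_zero).comp
      (f := fun s => (s, x)) t (by fun_prop)
  set a := deriv (fun s => Y s x) t
  have hid : HasDerivAt (fun s => Y s x + s * g (Y s x))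
      (a + (1 * g (Y t x) + t * (deriv g (Y t x) * a))) t :=
    hdiff.hasDerivAt.add ((hasDerivAt_id t).mul
      ((hg.differentiable one_ne_zero _).hasDerivAt.comp t hdiff.hasDerivAt))
  have hconst : (fun _ => x) =ᶠ[𝓝 t] fun s => Y s x + s * g (Y s x) :=
    eventually_of_mem (Ioi_mem_nhds ht) fun s hs => (hY s x hs.le).symm
  have hzero := hid.unique ((hasDerivAt_const t x).congr_of_eventuallyEq hconst.symm)
  have hc := (one_add_mul_deriv_pos hmono ht.le (Y t x)).ne'
  have : a = -g (Y t x) * (1 + t * deriv g (Y t x))⁻¹ := by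
    field_simp
    linarith
  exact this ▸ hdiff.hasDerivAt

theorem deriv_comp_time_add_deriv_flux_eq_zero {φ f : ℝ → ℝ} (hY : IsCharacteristicFoot g Y)
    (hg : ContDiff ℝ 1 g) (hmono : Monotone g) (hφ : DifferentiableAt ℝ φ (Y t x))
    (hf : HasDerivAt f (g (Y t x)) (φ (Y t x))) (ht : 0 < t) :
    deriv (fun s => φ (Y s x)) t + deriv (fun z => f (φ (Y t z))) x = 0 := by
  have htime : HasDerivAt (fun s => φ (Y s x)) _ t :=
    hφ.hasDerivAt.comp t (hY.hasDerivAt_time hg hmono ht x)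
  have hspace : HasDerivAt (fun z => φ (Y t z)) _ x :=
    hφ.hasDerivAt.comp x (hY.hasDerivAt_space hg hmono ht.le x)
  have hflux : HasDerivAt (fun z => f (φ (Y t z))) _ x := hf.comp x hspace
  rw [htime.deriv, hflux.deriv]
  ring

theorem deriv_comp_space_pos {φ : ℝ → ℝ} {φ' : ℝ} (hY : IsCharacteristicFoot g Y)
    (hg : ContDiff ℝ 1 g) (hmono : Monotone g) (ht : 0 ≤ t) (hφ : HasDerivAt φ φ' (Y t x))
    (hφ' : 0 < φ') : 0 < deriv (fun z => φ (Y t z)) x := by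
  have hspace : HasDerivAt (fun z => φ (Y t z)) _ x :=
    hφ.comp x (hY.hasDerivAt_space hg hmono ht x)
  rw [hspace.deriv]
  have := one_add_mul_deriv_pos hmono ht (Y t x)
  positivity

theorem tendsto_atTop (hY : IsCharacteristicFoot g Y) {M : ℝ} (hM : ∀ y, g y ≤ M) (ht : 0 ≤ t) :
    Tendsto (Y t) atTop atTop :=
  tendsto_atTop_mono (fun x => show x + -(t * M) ≤ Y t x by
      nlinarith [hY t x ht, mul_le_mul_of_nonneg_left (hM (Y t x)) ht])
    (tendsto_atTop_add_const_right _ (-(t * M)) tendsto_id)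

theorem tendsto_atBot (hY : IsCharacteristicFoot g Y) {m : ℝ} (hm : ∀ y, m ≤ g y) (ht : 0 ≤ t) :
    Tendsto (Y t) atBot atBot :=
  tendsto_atBot_mono (fun x => show Y t x ≤ x + -(t * m) by
      nlinarith [hY t x ht, mul_le_mul_of_nonneg_left (hm (Y t x)) ht])
    (tendsto_atBot_add_const_right _ (-(t * m)) tendsto_id)

end IsCharacteristicFoot

end Characteristics

namespace Set.LeftInvOn

variable {l linv : ℝ → ℝ} {a b z : ℝ}

theorem rightInvOn_Icc (h : LeftInvOn linv l (Icc a b)) (hab : a ≤ b)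
    (hl : ContinuousOn l (Icc a b)) : RightInvOn linv l (Icc (l a) (l b)) := by
  intro z hz
  obtain ⟨u, hu, rfl⟩ := intermediate_value_Icc hab hl hz
  rw [h hu]

theorem mapsTo_Icc (h : LeftInvOn linv l (Icc a b)) (hab : a ≤ b)
    (hl : ContinuousOn l (Icc a b)) : MapsTo linv (Icc (l a) (l b)) (Icc a b) := by
  intro z hz
  obtain ⟨u, hu, rfl⟩ := intermediate_value_Icc hab hl hz
  rwa [h hu]

theorem mapsTo_Ioo (h : LeftInvOn linv l (Icc a b)) (hab : a ≤ b)
    (hl : ContinuousOn l (Icc a b)) : MapsTo linv (Ioo (l a) (l b)) (Ioo a b) := by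
  intro z hz
  obtain ⟨u, hu, rfl⟩ := intermediate_value_Ioo hab hl hz
  rwa [h (Ioo_subset_Icc_self hu)]

theorem monotoneOn_Icc (h : LeftInvOn linv l (Icc a b)) (hab : a ≤ b)
    (hl : ContinuousOn l (Icc a b)) (hmono : StrictMonoOn l (Icc a b)) :
    MonotoneOn linv (Icc (l a) (l b)) := by
  intro z hz z' hz' hzz'
  rwa [← hmono.le_iff_le (h.mapsTo_Icc hab hl hz) (h.mapsTo_Icc hab hl hz'),
    h.rightInvOn_Icc hab hl hz, h.rightInvOn_Icc hab hl hz']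

theorem Icc_subset_image_Icc (h : LeftInvOn linv l (Icc a b)) (hmono : StrictMonoOn l (Icc a b)) :
    Icc a b ⊆ linv '' Icc (l a) (l b) :=
  h.image_image.symm.subset.trans (image_mono hmono.monotoneOn.image_Icc_subset)

theorem tendsto_nhdsLE (h : LeftInvOn linv l (Icc a b)) (hab : a < b)
    (hl : ContinuousOn l (Icc a b)) (hmono : StrictMonoOn l (Icc a b)) :
    Tendsto linv (𝓝[≤] (l b)) (𝓝 b) := by
  have hb := h (right_mem_Icc.2 hab.le)
  have := continuousWithinAt_left_of_monotoneOn_of_image_mem_nhdsWithin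
    (h.monotoneOn_Icc hab.le hl hmono)
    (Icc_mem_nhdsLE (hmono (left_mem_Icc.2 hab.le) (right_mem_Icc.2 hab.le) hab))
    (by rw [hb]; exact mem_of_superset (Icc_mem_nhdsLE hab) (h.Icc_subset_image_Icc hmono))
  rwa [ContinuousWithinAt, hb] at this

theorem tendsto_nhdsGE (h : LeftInvOn linv l (Icc a b)) (hab : a < b)
    (hl : ContinuousOn l (Icc a b)) (hmono : StrictMonoOn l (Icc a b)) :
    Tendsto linv (𝓝[≥] (l a)) (𝓝 a) := by
  have ha := h (left_mem_Icc.2 hab.le)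
  have := continuousWithinAt_right_of_monotoneOn_of_image_mem_nhdsWithin
    (h.monotoneOn_Icc hab.le hl hmono)
    (Icc_mem_nhdsGE (hmono (left_mem_Icc.2 hab.le) (right_mem_Icc.2 hab.le) hab))
    (by rw [ha]; exact mem_of_superset (Icc_mem_nhdsGE hab) (h.Icc_subset_image_Icc hmono))
  rwa [ContinuousWithinAt, ha] at this

theorem contDiffAt {n : WithTop ℕ∞} (h : LeftInvOn linv l (Icc a b)) (hab : a ≤ b)
    (hl : ContDiff ℝ n l) (hn : n ≠ 0) (hl' : ∀ u ∈ Ioo a b, deriv l u ≠ 0)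
    (hz : z ∈ Ioo (l a) (l b)) : ContDiffAt ℝ n linv z := by
  have hu := h.mapsTo_Ioo hab hl.continuous.continuousOn hz
  have hlz := h.rightInvOn_Icc hab hl.continuous.continuousOn (Ioo_subset_Icc_self hz)
  refine contDiffWithinAt_univ.1 <| contDiffWithinAt_of_locally_unique_solution
    (F := fun p : ℝ × ℝ => l p.2 - p.1) (by fun_prop) hn
    ((hl.differentiable hn _).hasDerivAt.sub_const z) (hl' _ hu) ?_
  rw [univ_prod_univ, nhdsWithin_univ]
  filter_upwards [continuous_snd.continuousAt.preimage_mem_nhds (isOpen_Ioo.mem_nhds hu)]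
    with p hp hFp
  rw [hlz, sub_self, sub_eq_zero] at hFp
  rw [← hFp, h (Ioo_subset_Icc_self hp)]

theorem hasDerivAt {n : WithTop ℕ∞} (h : LeftInvOn linv l (Icc a b)) (hab : a ≤ b)
    (hl : ContDiff ℝ n l) (hn : n ≠ 0) (hl' : ∀ u ∈ Ioo a b, deriv l u ≠ 0)
    (hz : z ∈ Ioo (l a) (l b)) : HasDerivAt linv (deriv l (linv z))⁻¹ z :=
  .of_local_left_inverse (h.contDiffAt hab hl hn hl' hz).continuousAt
    (hl.differentiable hn _).hasDerivAt (hl' _ (h.mapsTo_Ioo hab hl.continuous.continuousOn hz))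
    (eventually_of_mem (isOpen_Ioo.mem_nhds hz) fun _ hz' =>
      h.rightInvOn_Icc hab hl.continuous.continuousOn (Ioo_subset_Icc_self hz'))

end Set.LeftInvOn

theorem stmt_4 (um up : ℝ) (hu : um < up)
    (f : ℝ → ℝ) (hf : ContDiff ℝ 3 f)
    (hconv : ∀ u ∈ Set.Icc um up, 0 < deriv (deriv f) u)
    (linv : ℝ → ℝ) (hlinv : ∀ u ∈ Set.Icc um up, linv (deriv f u) = u)
    (Y : ℝ → ℝ → ℝ)
    (hY : ∀ t x : ℝ, 0 ≤ t → Y t x + t * w0 (deriv f um) (deriv f up) (Y t x) = x) :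
    let Ur : ℝ → ℝ → ℝ := fun t x => linv (w0 (deriv f um) (deriv f up) (Y t x))
    ContDiffOn ℝ 2 (fun q : ℝ × ℝ => Ur q.1 q.2) (Set.Ici (0:ℝ) ×ˢ Set.univ) ∧
    (∀ t x : ℝ, 0 < t →
      deriv (fun s => Ur s x) t + deriv (fun y => f (Ur t y)) x = 0) ∧
    (∀ x : ℝ, Ur 0 x
      = linv ((deriv f um + deriv f up) / 2 + ((deriv f up - deriv f um) / 2) * Real.tanh x)) ∧
    (∀ t : ℝ, 0 ≤ t →
      Tendsto (fun x => Ur t x) atTop (nhds up) ∧ Tendsto (fun x => Ur t x) atBot (nhds um)) ∧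
    (∀ t x : ℝ, 0 ≤ t →
      um < Ur t x ∧ Ur t x < up ∧ 0 < deriv (fun y => Ur t y) x) := by
  intro Ur
  set l := deriv f
  set g := w0 (l um) (l up)
  have hl : ContDiff ℝ 2 l := hf.deriv'
  have hlc := hl.continuous.continuousOn (s := Icc um up)
  have hlmono : StrictMonoOn l (Icc um up) := strictMonoOn_of_deriv_pos (convex_Icc um up)
    hlc fun u hu => hconv u (interior_subset hu)
  have hl' : ∀ u ∈ Ioo um up, deriv l u ≠ 0 := fun u hu => (hconv u (Ioo_subset_Icc_self hu)).ne'
  have hw : l um < l up := hlmono (left_mem_Icc.2 hu.le) (right_mem_Icc.2 hu.le) hu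
  have hlinv' : LeftInvOn linv l (Icc um up) := hlinv
  have hY' : IsCharacteristicFoot g Y := hY
  have hgmono : Monotone g := (strictMono_w0 hw).monotone
  have hg (y : ℝ) : g y ∈ Ioo (l um) (l up) := w0_mem_Ioo hw y
  have hU (y : ℝ) : linv (g y) ∈ Ioo um up := hlinv'.mapsTo_Ioo hu.le hlc (hg y)
  have hφ (y : ℝ) : HasDerivAt (fun z => linv (g z)) ((deriv l (linv (g y)))⁻¹ * deriv g y) y :=
    (hlinv'.hasDerivAt hu.le hl two_ne_zero hl' (hg y)).comp y
      (contDiff_w0.differentiable one_ne_zero y).hasDerivAt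
  refine ⟨fun q hq => ?_, fun t x ht => ?_, fun x => ?_, fun t ht => ⟨?_, ?_⟩, fun t x ht => ?_⟩
  · exact (hlinv'.contDiffAt hu.le hl two_ne_zero hl' (hg _)).comp_contDiffWithinAt q
      (contDiff_w0.contDiffAt.comp_contDiffWithinAt q
        (hY'.contDiffOn contDiff_w0 two_ne_zero hgmono q hq))
  · have hflux : HasDerivAt f (l (linv (g (Y t x)))) (linv (g (Y t x))) :=
      (hf.differentiable (by norm_num) _).hasDerivAt
    rw [hlinv'.rightInvOn_Icc hu.le hlc (Ioo_subset_Icc_self (hg _))] at hflux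
    exact hY'.deriv_comp_time_add_deriv_flux_eq_zero contDiff_w0 hgmono (hφ _).differentiableAt
      hflux ht
  · change linv (g (Y 0 x)) = _
    rw [hY'.eq_of_add_mul_eq hgmono le_rfl (y := x) (by simp)]
    rfl
  · exact (hlinv'.tendsto_nhdsLE hu hlc hlmono).comp <| tendsto_nhdsWithin_iff.2
      ⟨tendsto_w0_atTop.comp (hY'.tendsto_atTop (fun y => (hg y).2.le) ht),
        .of_forall fun x => (hg _).2.le⟩
  · exact (hlinv'.tendsto_nhdsGE hu hlc hlmono).comp <| tendsto_nhdsWithin_iff.2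
      ⟨tendsto_w0_atBot.comp (hY'.tendsto_atBot (fun y => (hg y).1.le) ht),
        .of_forall fun x => (hg _).1.le⟩
  · have := hconv _ (Ioo_subset_Icc_self (hU (Y t x)))
    have := deriv_w0_pos hw (Y t x)
    exact ⟨(hU _).1, (hU _).2, hY'.deriv_comp_space_pos contDiff_w0 hgmono ht (hφ _) (by positivity)⟩
end

section
/- (a) For every t > −1, ∫_ℝ v(t,x) dx = u₊ − u₋, where v(t,x) := (1+t)^{−1/(p+1)}(max(A − B(x(1+t)^{−1/(p+1)})², 0))^{1/(p−1)}. (b) The contact wave U(t,x) := u₋ + ∫_{−∞}^x t^{−1/(p+1)}(max(A − B(y t^{−1/(p+1)})², 0))^{1/(p−1)} dy (t > 0) is continuously differentiable on (0,∞)×ℝ with ∂_x U(t,x) = t^{−1/(p+1)}(max(A − B(x t^{−1/(p+1)})², 0))^{1/(p−1)} ≥ 0, the function x ↦ (∂_x U(t,x))^p is continuously differentiable, and at every (t,x) with t > 0 and |x| ≠ √(A/B)·t^{1/(p+1)} one has ∂_t U(t,x) = μ·∂_x((∂_x U)^p)(t,x); moreover lim_{x→−∞} U(t,x) = u₋ and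 lim_{x→+∞} U(t,x) = u₊ for every t > 0. -/
/-!
With `b = t^{-1/(p+1)}` and `g(y) = (A - B y²)₊^{1/(p-1)}`, the profile is the rescaling
`v(t,x) = b g(x b)`, so `U(t,x) = u₋ + G(x b)` where `G(z) = ∫_{-∞}^z g`. The substitution
`y = -√(A/B) cos θ` gives `∫ g = 2 A^{(p+1)/(2(p-1))} B^{-1/2} ∫_0^{π/2} sin^{(p+1)/(p-1)}`,
which the normalization makes `u₊ - u₋`; this gives the mass identity and the limits at `±∞`.
By the chain rule, `∂_t U` and `∂_x (v^p)` are the multiples `-1/(p+1)` and `-2Bp/(p-1)` of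
`x t^{-(p+2)/(p+1)} g(x b)`, and the value of `B` makes the first `μ` times the second. The flux
`v^p = b^p (A - B(xb)²)₊^{p/(p-1)}` is `C¹` because `r ↦ r₊^q` is `C¹` for `q > 1`.
-/

open Real MeasureTheory Filter Set Topology

/-- The Barenblatt-type profile `v(t,x) = t^{-1/(p+1)} (max(A - B(x t^{-1/(p+1)})², 0))^{1/(p-1)}`,
the spatial derivative of the contact wave for `p`-Laplacian type viscosity. -/
noncomputable def vfun (p A B t x : ℝ) : ℝ :=
  t ^ (-(1:ℝ)/(p+1)) * (max (A - B * (x * t ^ (-(1:ℝ)/(p+1)))^2) 0) ^ ((1:ℝ)/(p-1))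

/-- The contact wave for `p`-Laplacian type viscosity,
`U(t,x) = u₋ + ∫_{-∞}^x t^{-1/(p+1)} (max(A - B(y t^{-1/(p+1)})², 0))^{1/(p-1)} dy`. -/
noncomputable def Ucw (p A B um t x : ℝ) : ℝ :=
  um + ∫ y in Set.Iio x, vfun p A B t y

noncomputable def barenblattProfile (A B α y : ℝ) : ℝ := max (A - B * y ^ 2) 0 ^ α

section Profile

variable {A B α : ℝ}

lemma barenblattProfile_nonneg (y : ℝ) : 0 ≤ barenblattProfile A B α y :=
  rpow_nonneg (le_max_right _ _) _

lemma continuous_barenblattProfile (hα : 0 ≤ α) : Continuous (barenblattProfile A B α) :=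
  (by fun_prop : Continuous fun y : ℝ => max (A - B * y ^ 2) 0).rpow_const fun _ => Or.inr hα

lemma support_barenblattProfile_subset (hB : 0 < B) (hα : α ≠ 0) :
    Function.support (barenblattProfile A B α) ⊆ Ioo (-√(A / B)) √(A / B) := by
  intro y hy
  have hpos : 0 < A - B * y ^ 2 := by
    by_contra! h
    exact hy (by rw [barenblattProfile, max_eq_right h, zero_rpow hα])
  have : |y| < √(A / B) := by
    rw [lt_sqrt (abs_nonneg y), sq_abs, lt_div_iff₀ hB]; linarith
  exact abs_lt.mp this

lemma integrable_barenblattProfile (hB : 0 < B) (hα : 0 < α) :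
    Integrable (barenblattProfile A B α) :=
  (continuous_barenblattProfile hα.le).integrable_of_hasCompactSupport <|
    HasCompactSupport.intro isCompact_Icc fun _ hy => Function.notMem_support.mp fun h =>
      hy (Ioo_subset_Icc_self (support_barenblattProfile_subset hB hα.ne' h))

lemma integral_sin_rpow_zero_pi {r : ℝ} (hr : 0 ≤ r) :
    ∫ θ in 0..π, sin θ ^ r = 2 * ∫ θ in 0..π / 2, sin θ ^ r := by
  have hint : ∀ a b, IntervalIntegrable (fun θ => sin θ ^ r) volume a b := fun a b =>
    (continuous_sin.rpow_const fun _ => Or.inr hr).intervalIntegrable a b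
  have hreflect : ∫ θ in π / 2..π, sin θ ^ r = ∫ θ in 0..π / 2, sin θ ^ r := by
    have := intervalIntegral.integral_comp_sub_left (fun θ => sin θ ^ r) π (a := 0) (b := π / 2)
    rw [sub_zero, sub_half] at this
    simpa only [sin_pi_sub] using this.symm
  rw [← intervalIntegral.integral_add_adjacent_intervals (hint 0 (π / 2)) (hint (π / 2) π),
    hreflect, two_mul]

lemma sqrt_div_mul_rpow (hA : 0 ≤ A) (hB : 0 ≤ B) (hα : α + 1 / 2 ≠ 0) :
    √(A / B) * A ^ α = A ^ (α + 1 / 2) * B ^ (-(1:ℝ) / 2) := by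
  rw [sqrt_eq_rpow, div_rpow hA hB, rpow_add' hA hα, neg_div, rpow_neg hB]
  ring

lemma integral_barenblattProfile (hA : 0 ≤ A) (hB : 0 < B) (hα : 0 < α) :
    ∫ y, barenblattProfile A B α y =
      2 * A ^ (α + 1 / 2) * B ^ (-(1:ℝ) / 2) * ∫ θ in 0..π / 2, sin θ ^ (2 * α + 1) := by
  set c := √(A / B)
  have hBc : B * c ^ 2 = A := by rw [sq_sqrt (by positivity)]; field_simp
  have hsubst : ∀ θ ∈ uIcc 0 π,
      (c * sin θ) • barenblattProfile A B α (-c * cos θ) =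
        c * A ^ α * sin θ ^ (2 * α + 1) := by
    intro θ hθ
    rw [uIcc_of_le pi_pos.le] at hθ
    have hsin : 0 ≤ sin θ := sin_nonneg_of_nonneg_of_le_pi hθ.1 hθ.2
    have hquad : A - B * (-c * cos θ) ^ 2 = A * sin θ ^ 2 := by
      rw [← hBc, sin_sq]; ring
    rw [barenblattProfile, hquad, max_eq_left (by positivity), mul_rpow hA (sq_nonneg _),
      ← rpow_natCast, ← rpow_mul hsin, rpow_add' hsin (by positivity), rpow_one, smul_eq_mul]
    push_cast
    ring
  calc ∫ y, barenblattProfile A B α y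
      = ∫ y in -c..c, barenblattProfile A B α y :=
        (intervalIntegral.integral_eq_integral_of_support_subset
          ((support_barenblattProfile_subset hB hα.ne').trans Ioo_subset_Ioc_self)).symm
    _ = ∫ θ in 0..π, (c * sin θ) • barenblattProfile A B α (-c * cos θ) := by
        have := intervalIntegral.integral_deriv_smul_comp (f := fun θ => -c * cos θ)
          (f' := fun θ => c * sin θ) (g := barenblattProfile A B α) (a := 0) (b := π)
          (fun θ _ => by simpa using (hasDerivAt_cos θ).const_mul (-c)) (by fun_prop)
          (continuous_barenblattProfile hα.le)
        simpa using this.symm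
    _ = c * A ^ α * ∫ θ in 0..π, sin θ ^ (2 * α + 1) := by
        rw [intervalIntegral.integral_congr hsubst, intervalIntegral.integral_const_mul]
    _ = _ := by
        rw [integral_sin_rpow_zero_pi (by positivity), sqrt_div_mul_rpow hA hB.le (by positivity)]
        ring

end Profile

section Primitive

variable {E : Type*} [NormedAddCommGroup E] [NormedSpace ℝ E] {g : ℝ → E}

lemma setIntegral_Iio_comp_mul_right (g : ℝ → E) (a : ℝ) {b : ℝ} (hb : 0 < b) :
    ∫ x in Iio a, g (x * b) = b⁻¹ • ∫ x in Iio (a * b), g x := by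
  have hpre : (· * b) ⁻¹' Iio (a * b) = Iio a := by
    rw [preimage_mul_const_Iio₀ _ hb, mul_div_cancel_right₀ _ hb.ne']
  have hind : (Iio a).indicator (fun x => g (x * b)) =
      fun x => (Iio (a * b)).indicator g (x * b) := by
    funext x
    rw [← hpre]
    exact indicator_comp_right (· * b)
  rw [← integral_indicator measurableSet_Iio, ← integral_indicator measurableSet_Iio, hind,
    Measure.integral_comp_mul_right, abs_of_pos (inv_pos.mpr hb)]

lemma hasDerivAt_setIntegral_Iio [CompleteSpace E] (hg : Continuous g) (hi : Integrable g)
    (z : ℝ) : HasDerivAt (fun z => ∫ y in Iio z, g y) (g z) z := by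
  have hsplit :
      (fun z => ∫ y in Iio z, g y) = fun z => (∫ y in Iio 0, g y) + ∫ y in 0..z, g y := by
    funext w
    rw [← intervalIntegral.integral_Iio_sub_Iio' hi.integrableOn hi.integrableOn]
    abel
  rw [hsplit]
  exact (intervalIntegral.integral_hasDerivAt_right hi.intervalIntegrable
    (hg.stronglyMeasurableAtFilter _ _) hg.continuousAt).const_add _

lemma contDiff_setIntegral_Iio [CompleteSpace E] (hg : Continuous g) (hi : Integrable g) :
    ContDiff ℝ 1 (fun z => ∫ y in Iio z, g y) := by
  rw [contDiff_one_iff_deriv]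
  refine ⟨fun z => (hasDerivAt_setIntegral_Iio hg hi z).differentiableAt, ?_⟩
  rwa [funext fun z => (hasDerivAt_setIntegral_Iio hg hi z).deriv]

lemma tendsto_setIntegral_Iio_atTop (hi : Integrable g) :
    Tendsto (fun z => ∫ y in Iio z, g y) atTop (𝓝 (∫ y, g y)) :=
  (aecover_Iio tendsto_id).integral_tendsto_of_countably_generated hi

end Primitive

lemma hasDerivAt_max_zero_rpow {q : ℝ} (hq : 1 < q) (r : ℝ) :
    HasDerivAt (fun r : ℝ => max r 0 ^ q) (q * max r 0 ^ (q - 1)) r := by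
  have hq0 : q - 1 ≠ 0 := sub_ne_zero.mpr hq.ne'
  rcases lt_trichotomy r 0 with hr | rfl | hr
  · rw [max_eq_right hr.le, zero_rpow hq0, mul_zero]
    refine (hasDerivAt_const r ((0:ℝ) ^ q)).congr_of_eventuallyEq ?_
    filter_upwards [eventually_lt_nhds hr] with y hy
    rw [max_eq_right hy.le]
  · rw [max_self, zero_rpow hq0, mul_zero]
    have hleft : HasDerivWithinAt (fun r : ℝ => max r 0 ^ q) 0 (Iic 0) 0 :=
      (hasDerivWithinAt_const 0 _ ((0:ℝ) ^ q)).congr (fun y hy => by rw [max_eq_right hy])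
        (by rw [max_self])
    have hright : HasDerivWithinAt (fun r : ℝ => max r 0 ^ q) 0 (Ici 0) 0 := by
      have := (hasDerivAt_rpow_const (x := 0) (Or.inr hq.le)).hasDerivWithinAt (s := Ici 0)
      rw [zero_rpow hq0, mul_zero] at this
      exact this.congr (fun y hy => by rw [max_eq_left hy]) (by rw [max_self])
    simpa using hleft.union hright
  · rw [max_eq_left hr.le]
    refine (hasDerivAt_rpow_const (Or.inl hr.ne')).congr_of_eventuallyEq ?_
    filter_upwards [eventually_gt_nhds hr] with y hy
    rw [max_eq_left hy.le]

lemma contDiff_max_zero_rpow {q : ℝ} (hq : 1 < q) :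
    ContDiff ℝ 1 (fun r : ℝ => max r 0 ^ q) := by
  rw [contDiff_one_iff_deriv]
  refine ⟨fun r => (hasDerivAt_max_zero_rpow hq r).differentiableAt, ?_⟩
  rw [funext fun r => (hasDerivAt_max_zero_rpow hq r).deriv]
  exact continuous_const.mul ((continuous_id.max continuous_const).rpow_const
    fun _ => Or.inr (by linarith))

section ContactWave

variable {p A B um t : ℝ}

lemma vfun_eq_barenblattProfile (p A B t x : ℝ) :
    vfun p A B t x = t ^ (-(1:ℝ)/(p+1)) *
      barenblattProfile A B (1/(p-1)) (x * t ^ (-(1:ℝ)/(p+1))) := rfl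

lemma vfun_nonneg (ht : 0 ≤ t) (x : ℝ) : 0 ≤ vfun p A B t x :=
  mul_nonneg (rpow_nonneg ht _) (barenblattProfile_nonneg _)

lemma integral_vfun (ht : 0 < t) :
    ∫ x, vfun p A B t x = ∫ y, barenblattProfile A B (1/(p-1)) y := by
  have hb := rpow_pos_of_pos ht (-(1:ℝ)/(p+1))
  simp_rw [vfun_eq_barenblattProfile]
  rw [integral_const_mul, Measure.integral_comp_mul_right, abs_of_pos (inv_pos.mpr hb),
    smul_eq_mul, mul_inv_cancel_left₀ hb.ne']

lemma Ucw_eq (ht : 0 < t) (x : ℝ) :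
    Ucw p A B um t x =
      um + ∫ y in Iio (x * t ^ (-(1:ℝ)/(p+1))), barenblattProfile A B (1/(p-1)) y := by
  have hb := rpow_pos_of_pos ht (-(1:ℝ)/(p+1))
  rw [Ucw]
  simp_rw [vfun_eq_barenblattProfile]
  rw [integral_const_mul, setIntegral_Iio_comp_mul_right _ _ hb, smul_eq_mul,
    mul_inv_cancel_left₀ hb.ne']

lemma contDiffOn_Ucw (hp : 1 < p) (hB : 0 < B) :
    ContDiffOn ℝ 1 (fun q : ℝ × ℝ => Ucw p A B um q.1 q.2) (Ioi 0 ×ˢ univ) := by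
  have hα : 0 < 1 / (p - 1) := one_div_pos.mpr (sub_pos.mpr hp)
  have hG := contDiff_setIntegral_Iio (continuous_barenblattProfile (A := A) (B := B) hα.le)
    (integrable_barenblattProfile hB hα)
  refine ContDiffOn.congr ?_ fun q hq => Ucw_eq (hq.1 : 0 < q.1) q.2
  exact contDiffOn_const.add (hG.comp_contDiffOn (contDiffOn_snd.mul
    (contDiffOn_fst.rpow_const_of_ne fun q hq => (hq.1 : 0 < q.1).ne')))

lemma hasDerivAt_Ucw (hp : 1 < p) (hB : 0 < B) (ht : 0 < t) (x : ℝ) :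
    HasDerivAt (fun y => Ucw p A B um t y) (vfun p A B t x) x := by
  have hα : 0 < 1 / (p - 1) := one_div_pos.mpr (sub_pos.mpr hp)
  have hG := hasDerivAt_setIntegral_Iio (continuous_barenblattProfile (A := A) (B := B) hα.le)
    (integrable_barenblattProfile hB hα) (x * t ^ (-(1:ℝ)/(p+1)))
  rw [vfun_eq_barenblattProfile, mul_comm]
  exact ((hG.comp x (hasDerivAt_mul_const _)).const_add um).congr_of_eventuallyEq
    (Eventually.of_forall (Ucw_eq ht))

lemma hasDerivAt_Ucw_time (hp : 1 < p) (hB : 0 < B) (ht : 0 < t) (x : ℝ) :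
    HasDerivAt (fun s => Ucw p A B um s x)
      (-(1 / (p + 1)) * x * t ^ (-(1:ℝ)/(p+1) - 1) *
        barenblattProfile A B (1/(p-1)) (x * t ^ (-(1:ℝ)/(p+1)))) t := by
  have hα : 0 < 1 / (p - 1) := one_div_pos.mpr (sub_pos.mpr hp)
  have hG := hasDerivAt_setIntegral_Iio (continuous_barenblattProfile (A := A) (B := B) hα.le)
    (integrable_barenblattProfile hB hα) (x * t ^ (-(1:ℝ)/(p+1)))
  have hscale := (hasDerivAt_rpow_const (p := -(1:ℝ)/(p+1)) (Or.inl ht.ne')).const_mul x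
  refine (((hG.comp t hscale).const_add um).congr_of_eventuallyEq
    ((eventually_gt_nhds ht).mono fun s hs => Ucw_eq hs x)).congr_deriv ?_
  ring

lemma vfun_rpow_eq (ht : 0 < t) (x : ℝ) :
    vfun p A B t x ^ p = (t ^ (-(1:ℝ)/(p+1))) ^ p *
      max (A - B * (x * t ^ (-(1:ℝ)/(p+1))) ^ 2) 0 ^ (p / (p - 1)) := by
  rw [vfun, mul_rpow (rpow_nonneg ht.le _) (rpow_nonneg (le_max_right _ _) _),
    ← rpow_mul (le_max_right _ _), one_div_mul_eq_div]

lemma contDiff_vfun_rpow (hp : 1 < p) (ht : 0 < t) :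
    ContDiff ℝ 1 fun x => vfun p A B t x ^ p := by
  have hq : 1 < p / (p - 1) := (one_lt_div (sub_pos.mpr hp)).mpr (by linarith)
  rw [funext (vfun_rpow_eq ht)]
  exact contDiff_const.mul ((contDiff_max_zero_rpow hq).comp (by fun_prop))

lemma hasDerivAt_vfun_rpow (hp : 1 < p) (ht : 0 < t) (x : ℝ) :
    HasDerivAt (fun y => vfun p A B t y ^ p)
      (-(2 * B * p / (p - 1)) * x * t ^ (-(1:ℝ)/(p+1) - 1) *
        barenblattProfile A B (1/(p-1)) (x * t ^ (-(1:ℝ)/(p+1)))) x := by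
  have hp1 : p - 1 ≠ 0 := (sub_pos.mpr hp).ne'
  have hq : 1 < p / (p - 1) := (one_lt_div (sub_pos.mpr hp)).mpr (by linarith)
  set b := t ^ (-(1:ℝ)/(p+1)) with hb
  have hinner : HasDerivAt (fun y => A - B * (y * b) ^ 2) (-(B * (2 * (x * b) * b))) x := by
    simpa using (((hasDerivAt_mul_const b).pow 2).const_mul B).const_sub A
  have hpow : b ^ p * b * b = t ^ (-(1:ℝ)/(p+1) - 1) := by
    rw [hb, ← rpow_mul ht.le, ← rpow_add ht, ← rpow_add ht]
    congr 1
    field_simp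
    ring
  rw [funext (vfun_rpow_eq ht)]
  refine (((hasDerivAt_max_zero_rpow hq _).comp x hinner).const_mul (b ^ p)).congr_deriv ?_
  rw [barenblattProfile, show p / (p - 1) - 1 = 1 / (p - 1) by field_simp; ring, ← hpow]
  ring

lemma tendsto_Ucw_atBot (ht : 0 < t) :
    Tendsto (fun x => Ucw p A B um t x) atBot (𝓝 um) := by
  have hb := rpow_pos_of_pos ht (-(1:ℝ)/(p+1))
  have h := (tendsto_integral_Iio_zero (f := barenblattProfile A B (1/(p-1))) (μ := volume)
    (tendsto_id.atBot_mul_const hb)).const_add um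
  rw [add_zero] at h
  exact h.congr fun x => (Ucw_eq ht x).symm

lemma tendsto_Ucw_atTop (hp : 1 < p) (hB : 0 < B) (ht : 0 < t) :
    Tendsto (fun x => Ucw p A B um t x) atTop
      (𝓝 (um + ∫ y, barenblattProfile A B (1/(p-1)) y)) := by
  have hb := rpow_pos_of_pos ht (-(1:ℝ)/(p+1))
  have hα : 0 < 1 / (p - 1) := one_div_pos.mpr (sub_pos.mpr hp)
  exact (((tendsto_setIntegral_Iio_atTop (integrable_barenblattProfile hB hα)).comp
    (tendsto_id.atTop_mul_const hb)).const_add um).congr fun x => (Ucw_eq ht x).symm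

lemma deriv_Ucw_time_eq {μ : ℝ} (hp : 1 < p) (hμ : μ ≠ 0) (hB : 0 < B)
    (hBμ : B = (p - 1) / (2 * μ * p * (p + 1))) (ht : 0 < t) (x : ℝ) :
    deriv (fun s => Ucw p A B um s x) t = μ * deriv (fun y => vfun p A B t y ^ p) x := by
  have hcoef : -(1 / (p + 1)) = μ * -(2 * B * p / (p - 1)) := by
    have : p - 1 ≠ 0 := sub_ne_zero.mpr hp.ne'
    rw [hBμ]
    field_simp
  rw [(hasDerivAt_Ucw_time hp hB ht x).deriv, (hasDerivAt_vfun_rpow hp ht x).deriv, hcoef]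
  ring

end ContactWave

theorem stmt_9_general (p μ um up A B : ℝ)
    (hp : 1 < p) (hμ : 0 < μ)
    (hB : B = (p - 1) / (2 * μ * p * (p + 1))) (hA : 0 < A)
    (hnorm : 2 * A ^ ((p+1)/(2*(p-1))) * B ^ (-(1:ℝ)/2) *
      (∫ θ in (0:ℝ)..(Real.pi/2), Real.sin θ ^ ((p+1)/(p-1))) = up - um) :
    -- (a) total mass of the Barenblatt profile
    (∀ t : ℝ, -1 < t → (∫ x : ℝ, vfun p A B (1 + t) x) = up - um) ∧
    -- (b) regularity, spatial derivative, the p-Laplacian equation, and far-field limits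
    (ContDiffOn ℝ 1 (fun q : ℝ × ℝ => Ucw p A B um q.1 q.2) (Set.Ioi (0:ℝ) ×ˢ Set.univ) ∧
     (∀ t : ℝ, 0 < t → ∀ x : ℝ,
        HasDerivAt (fun y => Ucw p A B um t y) (vfun p A B t x) x ∧ 0 ≤ vfun p A B t x) ∧
     (∀ t : ℝ, 0 < t → ContDiff ℝ 1 (fun x => vfun p A B t x ^ p)) ∧
     (∀ t x : ℝ, 0 < t → |x| ≠ Real.sqrt (A / B) * t ^ ((1:ℝ)/(p+1)) →
        deriv (fun s => Ucw p A B um s x) t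
          = μ * deriv (fun y => vfun p A B t y ^ p) x) ∧
     (∀ t : ℝ, 0 < t →
        Tendsto (fun x => Ucw p A B um t x) atBot (nhds um) ∧
        Tendsto (fun x => Ucw p A B um t x) atTop (nhds up))) := by
  have hp1 : 0 < p - 1 := sub_pos.mpr hp
  have hp0 : 0 < p := by linarith
  have hB0 : 0 < B := hB ▸ div_pos hp1 (by positivity)
  have hmass : ∫ y, barenblattProfile A B (1/(p-1)) y = up - um := by
    rw [integral_barenblattProfile hA.le hB0 (one_div_pos.mpr hp1), ← hnorm,
      show 1 / (p - 1) + 1 / 2 = (p + 1) / (2 * (p - 1)) by field_simp; ring,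
      show 2 * (1 / (p - 1)) + 1 = (p + 1) / (p - 1) by field_simp; ring]
  refine ⟨fun t ht => (integral_vfun (by linarith)).trans hmass, contDiffOn_Ucw hp hB0,
    fun t ht x => ⟨hasDerivAt_Ucw hp hB0 ht x, vfun_nonneg ht.le x⟩,
    fun t ht => contDiff_vfun_rpow hp ht,
    fun t x ht _ => deriv_Ucw_time_eq hp hμ.ne' hB0 hB ht x,
    fun t ht => ⟨tendsto_Ucw_atBot ht, ?_⟩⟩
  simpa only [hmass, add_sub_cancel] using tendsto_Ucw_atTop (A := A) (um := um) hp hB0 ht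

theorem stmt_9 (p μ um up A B : ℝ)
    (hp : 1 < p) (hμ : 0 < μ) (hu : um < up)
    (hB : B = (p - 1) / (2 * μ * p * (p + 1))) (hA : 0 < A)
    (hnorm : 2 * A ^ ((p+1)/(2*(p-1))) * B ^ (-(1:ℝ)/2) *
      (∫ θ in (0:ℝ)..(Real.pi/2), Real.sin θ ^ ((p+1)/(p-1))) = up - um) :
    -- (a) total mass of the Barenblatt profile
    (∀ t : ℝ, -1 < t → (∫ x : ℝ, vfun p A B (1 + t) x) = up - um) ∧
    -- (b) regularity, spatial derivative, the p-Laplacian equation, and far-field limits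
    (ContDiffOn ℝ 1 (fun q : ℝ × ℝ => Ucw p A B um q.1 q.2) (Set.Ioi (0:ℝ) ×ˢ Set.univ) ∧
     (∀ t : ℝ, 0 < t → ∀ x : ℝ,
        HasDerivAt (fun y => Ucw p A B um t y) (vfun p A B t x) x ∧ 0 ≤ vfun p A B t x) ∧
     (∀ t : ℝ, 0 < t → ContDiff ℝ 1 (fun x => vfun p A B t x ^ p)) ∧
     (∀ t x : ℝ, 0 < t → |x| ≠ Real.sqrt (A / B) * t ^ ((1:ℝ)/(p+1)) →
        deriv (fun s => Ucw p A B um s x) t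
          = μ * deriv (fun y => vfun p A B t y ^ p) x) ∧
     (∀ t : ℝ, 0 < t →
        Tendsto (fun x => Ucw p A B um t x) atBot (nhds um) ∧
        Tendsto (fun x => Ucw p A B um t x) atTop (nhds up))) :=
  stmt_9_general p μ um up A B hp hμ hB hA hnorm
end

section
/- For every t > 0: U(t,x) = u₋ for all x ≤ −√(A/B)·t^{1/(p+1)}; u₋ < U(t,x) < u₊ and ∂_x U(t,x) > 0 for all x with −√(A/B)·t^{1/(p+1)} < x < √(A/B)·t^{1/(p+1)}; and U(t,x) = u₊ for all x ≥ √(A/B)·t^{1/(p+1)}. -/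
open Real MeasureTheory Filter Set

noncomputable def wfun (p A B c y : ℝ) : ℝ :=
  c * (max (A - B * (y * c)^2) 0) ^ ((1:ℝ)/(p-1))

lemma vfun_eq_wfun (p A B t x : ℝ) : vfun p A B t x = wfun p A B (t ^ (-(1:ℝ)/(p+1))) x := rfl

lemma wfun_cont {p A B c : ℝ} (hp : 1 < p) : Continuous (wfun p A B c) := by
  have hq : (0:ℝ) ≤ 1/(p-1) := by
    have : (0:ℝ) < p - 1 := by linarith
    positivity
  have h1 : Continuous fun y : ℝ => max (A - B * (y * c)^2) 0 := by continuity
  exact continuous_const.mul (h1.rpow_const fun x => Or.inr hq)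

lemma wfun_nonneg {p A B c : ℝ} (hc : 0 ≤ c) (y : ℝ) : 0 ≤ wfun p A B c y :=
  mul_nonneg hc (Real.rpow_nonneg (le_max_right _ _) _)

lemma wfun_eq_zero {p A B c : ℝ} (hp : 1 < p) (hB : 0 < B) {y : ℝ}
    (h : A / B ≤ (y * c)^2) : wfun p A B c y = 0 := by
  have h1 : A ≤ B * (y*c)^2 := by
    rw [div_le_iff₀ hB] at h; linarith [h]
  have h2 : A - B * (y*c)^2 ≤ 0 := by linarith
  have hq : ((1:ℝ)/(p-1)) ≠ 0 := by
    have : (0:ℝ) < p - 1 := by linarith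
    positivity
  rw [wfun, max_eq_right h2, Real.zero_rpow hq, mul_zero]

lemma wfun_pos {p A B c : ℝ} (hp : 1 < p) (hB : 0 < B) (hc : 0 < c) {y : ℝ}
    (h : (y * c)^2 < A / B) : 0 < wfun p A B c y := by
  have h1 : B * (y*c)^2 < A := by
    rw [lt_div_iff₀ hB] at h; linarith
  have h2 : 0 < A - B * (y*c)^2 := by linarith
  rw [wfun, max_eq_left h2.le]
  exact mul_pos hc (Real.rpow_pos_of_pos h2 _)

lemma wfun_zero_of_abs {p A B c r : ℝ} (hp : 1 < p) (hB : 0 < B) (hr : 0 ≤ r)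
    (hrc : r^2 * c^2 = A/B) {y : ℝ} (hy : r ≤ |y|) : wfun p A B c y = 0 := by
  apply wfun_eq_zero hp hB
  have h1 : r^2 ≤ y^2 := by
    have := pow_le_pow_left₀ hr hy 2
    rwa [sq_abs] at this
  calc A/B = r^2 * c^2 := hrc.symm
    _ ≤ y^2 * c^2 := by nlinarith [sq_nonneg c]
    _ = (y*c)^2 := (mul_pow y c 2).symm

lemma wfun_pos_of_abs {p A B c r : ℝ} (hp : 1 < p) (hB : 0 < B) (hc : 0 < c) (hr : 0 ≤ r)
    (hrc : r^2 * c^2 = A/B) {y : ℝ} (hy1 : -r < y) (hy2 : y < r) : 0 < wfun p A B c y := by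
  apply wfun_pos hp hB hc
  have h1 : y^2 < r^2 := sq_lt_sq' hy1 hy2
  calc (y*c)^2 = y^2 * c^2 := mul_pow y c 2
    _ < r^2 * c^2 := by nlinarith [sq_nonneg c, mul_pos hc hc]
    _ = A/B := hrc

lemma wfun_integrable {p A B c : ℝ} (hp : 1 < p) (hA : 0 < A) (hB : 0 < B) (hc : 0 < c) :
    Integrable (wfun p A B c) := by
  set r := Real.sqrt (A/B) / c with hr_def
  have hAB : 0 < A/B := div_pos hA hB
  have hr : 0 < r := div_pos (Real.sqrt_pos.mpr hAB) hc
  have hrc : r^2 * c^2 = A/B := by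
    rw [hr_def, div_pow, div_mul_cancel₀ _ (by positivity : c^2 ≠ 0), Real.sq_sqrt hAB.le]
  apply (wfun_cont hp).integrable_of_hasCompactSupport
  apply HasCompactSupport.intro (isCompact_Icc (a := -r) (b := r))
  intro y hy
  simp only [Set.mem_Icc, not_and_or, not_le] at hy
  apply wfun_zero_of_abs hp hB hr.le hrc
  rcases hy with hy | hy
  · calc r ≤ -y := by linarith
      _ ≤ |y| := neg_le_abs y
  · exact le_trans hy.le (le_abs_self y)

lemma wfun_total {p A B c : ℝ} (hp : 1 < p) (hA : 0 < A) (hB : 0 < B) (hc : 0 < c) :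
    (∫ y, wfun p A B c y) =
      2 * A ^ ((p+1)/(2*(p-1))) * B ^ (-(1:ℝ)/2) *
        ∫ θ in (0:ℝ)..(Real.pi/2), Real.sin θ ^ ((p+1)/(p-1)) := by
  have hp1 : (0:ℝ) < p - 1 := by linarith
  have hq : (0:ℝ) < 1/(p-1) := by positivity
  have hm : (0:ℝ) < (p+1)/(p-1) := by
    apply div_pos (by linarith) hp1
  have hAB : (0:ℝ) < A / B := div_pos hA hB
  set s := Real.sqrt (A/B) with hs_def
  have hs : 0 < s := Real.sqrt_pos.mpr hAB
  have hs2 : s^2 = A/B := Real.sq_sqrt hAB.le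
  set r := s / c with hr_def
  have hr : 0 < r := div_pos hs hc
  have hrc : r * c = s := div_mul_cancel₀ s hc.ne'
  have hrc2 : r^2 * c^2 = A/B := by rw [← mul_pow, hrc, hs2]
  -- step 1: restrict to Ioc (-r) r
  have h1 : (∫ y, wfun p A B c y) = ∫ y in Set.Ioc (-r) r, wfun p A B c y := by
    rw [← MeasureTheory.integral_indicator measurableSet_Ioc]
    apply integral_congr_ae
    apply Filter.Eventually.of_forall
    intro y
    by_cases hy : y ∈ Set.Ioc (-r) r
    · rw [Set.indicator_of_mem hy]
    · rw [Set.indicator_of_notMem hy]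
      simp only [Set.mem_Ioc, not_and_or, not_lt, not_le] at hy
      apply wfun_zero_of_abs hp hB hr.le hrc2
      rcases hy with hy | hy
      · calc r ≤ -y := by linarith
          _ ≤ |y| := neg_le_abs y
      · exact le_trans hy.le (le_abs_self y)
  -- step 2: interval integral
  have h2 : (∫ y in Set.Ioc (-r) r, wfun p A B c y) = ∫ y in (-r)..r, wfun p A B c y :=
    (intervalIntegral.integral_of_le (by linarith)).symm
  -- step 3: substitution y = r sin θ
  have h3 : (∫ θ in (-(π/2))..(π/2), (r * Real.cos θ) • wfun p A B c (r * Real.sin θ))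
      = ∫ y in (-r)..r, wfun p A B c y := by
    have := intervalIntegral.integral_comp_smul_deriv
      (f := fun θ => r * Real.sin θ) (f' := fun θ => r * Real.cos θ)
      (g := wfun p A B c) (a := -(π/2)) (b := π/2)
      (fun θ _ => (Real.hasDerivAt_sin θ).const_mul r)
      ((continuous_const.mul Real.continuous_cos).continuousOn) (wfun_cont hp)
    simpa [Function.comp, Real.sin_pi_div_two, Real.sin_neg, mul_neg_one] using this
  -- step 4: pointwise simplification of the integrand
  have h4 : (∫ θ in (-(π/2))..(π/2), (r * Real.cos θ) • wfun p A B c (r * Real.sin θ))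
      = ∫ θ in (-(π/2))..(π/2),
          (s * A ^ ((1:ℝ)/(p-1))) * Real.cos θ ^ ((p+1)/(p-1)) := by
    apply intervalIntegral.integral_congr
    intro θ hθ
    rw [uIcc_of_le (by linarith [Real.pi_pos] : -(π/2) ≤ π/2)] at hθ
    have hcos : 0 ≤ Real.cos θ := Real.cos_nonneg_of_mem_Icc hθ
    have e1 : r * Real.sin θ * c = s * Real.sin θ := by
      calc r * Real.sin θ * c = (r * c) * Real.sin θ := by ring
        _ = s * Real.sin θ := by rw [hrc]
    have hb : B * s ^ 2 = A := by rw [hs2]; field_simp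
    have hsc := Real.sin_sq_add_cos_sq θ
    have e2 : A - B * (s * Real.sin θ)^2 = A * Real.cos θ^2 := by
      linear_combination (-(Real.sin θ ^ 2)) * hb - A * hsc
    have e3 : max (A * Real.cos θ^2) 0 = A * Real.cos θ^2 := max_eq_left (by positivity)
    have e4 : (A * Real.cos θ^2) ^ ((1:ℝ)/(p-1))
        = A ^ ((1:ℝ)/(p-1)) * Real.cos θ ^ (2*((1:ℝ)/(p-1))) := by
      rw [Real.mul_rpow hA.le (sq_nonneg _)]
      congr 1
      rw [← Real.rpow_natCast (Real.cos θ) 2, ← Real.rpow_mul hcos]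
      norm_num
    have e5 : Real.cos θ * Real.cos θ ^ (2*((1:ℝ)/(p-1))) = Real.cos θ ^ ((p+1)/(p-1)) := by
      have hne : (1:ℝ) + 2*(1/(p-1)) ≠ 0 := by positivity
      rw [show ((p+1)/(p-1) : ℝ) = 1 + 2*(1/(p-1)) by field_simp; ring]
      rw [Real.rpow_add' hcos hne, Real.rpow_one]
    show (r * Real.cos θ) • wfun p A B c (r * Real.sin θ) = _
    rw [smul_eq_mul, wfun, e1, e2, e3, e4]
    calc r * Real.cos θ * (c * (A ^ ((1:ℝ)/(p-1)) * Real.cos θ ^ (2*((1:ℝ)/(p-1)))))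
        = (r * c) * A ^ ((1:ℝ)/(p-1)) * (Real.cos θ * Real.cos θ ^ (2*((1:ℝ)/(p-1)))) := by
          ring
      _ = s * A ^ ((1:ℝ)/(p-1)) * Real.cos θ ^ ((p+1)/(p-1)) := by rw [hrc, e5]
  -- step 5/6: evenness and cos → sin
  have hFc : Continuous (fun θ : ℝ => Real.cos θ ^ ((p+1)/(p-1))) :=
    Real.continuous_cos.rpow_const (fun x => Or.inr hm.le)
  have h6 : (∫ θ in (0:ℝ)..(π/2), Real.cos θ ^ ((p+1)/(p-1)))
      = ∫ θ in (0:ℝ)..(π/2), Real.sin θ ^ ((p+1)/(p-1)) := by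
    have := intervalIntegral.integral_comp_sub_left
      (a := (0:ℝ)) (b := π/2) (fun u => Real.sin u ^ ((p+1)/(p-1))) (π/2)
    simp only [Real.sin_pi_div_two_sub, sub_self, sub_zero] at this
    rw [this]
  have h5 : (∫ θ in (-(π/2))..(π/2), Real.cos θ ^ ((p+1)/(p-1)))
      = 2 * ∫ θ in (0:ℝ)..(π/2), Real.sin θ ^ ((p+1)/(p-1)) := by
    have hadd := intervalIntegral.integral_add_adjacent_intervals
      (a := -(π/2)) (b := 0) (c := π/2)
      (hFc.intervalIntegrable (μ := volume) _ _) (hFc.intervalIntegrable (μ := volume) _ _)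
    have hneg : (∫ θ in (-(π/2))..(0:ℝ), Real.cos θ ^ ((p+1)/(p-1)))
        = ∫ θ in (0:ℝ)..(π/2), Real.cos θ ^ ((p+1)/(p-1)) := by
      have := intervalIntegral.integral_comp_neg (a := (0:ℝ)) (b := π/2)
        (fun u => Real.cos u ^ ((p+1)/(p-1)))
      simp only [Real.cos_neg, neg_zero] at this
      rw [← this]
    rw [← hadd, hneg, h6]
    ring
  -- step 7: constants
  have hsA : s * A ^ ((1:ℝ)/(p-1)) = A ^ ((p+1)/(2*(p-1))) * B ^ (-(1:ℝ)/2) := by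
    have hsr : s = A ^ ((1:ℝ)/2) * B ^ (-(1:ℝ)/2) := by
      rw [hs_def, Real.sqrt_eq_rpow, Real.div_rpow hA.le hB.le,
        show (-(1:ℝ)/2) = -(1/2) by ring, Real.rpow_neg hB.le, div_eq_mul_inv]
    rw [hsr]
    have : A ^ ((1:ℝ)/2) * A ^ ((1:ℝ)/(p-1)) = A ^ ((p+1)/(2*(p-1))) := by
      rw [← Real.rpow_add hA]
      congr 1
      field_simp
      ring
    calc A ^ ((1:ℝ)/2) * B ^ (-(1:ℝ)/2) * A ^ ((1:ℝ)/(p-1))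
        = (A ^ ((1:ℝ)/2) * A ^ ((1:ℝ)/(p-1))) * B ^ (-(1:ℝ)/2) := by ring
      _ = A ^ ((p+1)/(2*(p-1))) * B ^ (-(1:ℝ)/2) := by rw [this]
  rw [h1, h2, ← h3, h4, intervalIntegral.integral_const_mul, h5, hsA]
  ring

theorem stmt_10 (p μ um up A B : ℝ)
    (hp : 1 < p) (hμ : 0 < μ) (hu : um < up)
    (hB : B = (p - 1) / (2 * μ * p * (p + 1))) (hA : 0 < A)
    (hnorm : 2 * A ^ ((p+1)/(2*(p-1))) * B ^ (-(1:ℝ)/2) *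
      (∫ θ in (0:ℝ)..(Real.pi/2), Real.sin θ ^ ((p+1)/(p-1))) = up - um) :
    ∀ t : ℝ, 0 < t → ∀ x : ℝ,
      (x ≤ -(Real.sqrt (A / B) * t ^ ((1:ℝ)/(p+1))) → Ucw p A B um t x = um) ∧
      (-(Real.sqrt (A / B) * t ^ ((1:ℝ)/(p+1))) < x →
        x < Real.sqrt (A / B) * t ^ ((1:ℝ)/(p+1)) →
        um < Ucw p A B um t x ∧ Ucw p A B um t x < up ∧
          0 < deriv (fun y => Ucw p A B um t y) x) ∧
      (Real.sqrt (A / B) * t ^ ((1:ℝ)/(p+1)) ≤ x → Ucw p A B um t x = up) := by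
  have hB' : 0 < B := by
    rw [hB]
    apply div_pos (by linarith)
    have h0 : (0:ℝ) < p := by linarith
    have h1 : (0:ℝ) < p + 1 := by linarith
    positivity
  have hAB : 0 < A / B := div_pos hA hB'
  intro t ht x
  set c : ℝ := t ^ (-(1:ℝ)/(p+1)) with hc_def
  set τ : ℝ := t ^ ((1:ℝ)/(p+1)) with hτ_def
  have hτ : 0 < τ := Real.rpow_pos_of_pos ht _
  have hc : 0 < c := Real.rpow_pos_of_pos ht _
  have hcτ : c * τ = 1 := by
    rw [hc_def, hτ_def, ← Real.rpow_add ht,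
      show (-(1:ℝ)/(p+1) + 1/(p+1)) = 0 by ring, Real.rpow_zero]
  set s : ℝ := Real.sqrt (A/B) with hs_def
  have hs : 0 < s := Real.sqrt_pos.mpr hAB
  have hs2 : s^2 = A/B := Real.sq_sqrt hAB.le
  set r : ℝ := s * τ with hr_def
  have hr : 0 < r := mul_pos hs hτ
  have hrc2 : r^2 * c^2 = A/B := by
    calc r^2 * c^2 = s^2 * (c*τ)^2 := by ring
      _ = A/B := by rw [hcτ, hs2]; ring
  have hUeq : ∀ z : ℝ, Ucw p A B um t z = um + ∫ y in Set.Iio z, wfun p A B c y := by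
    intro z
    rw [Ucw]
    congr 1
  have hint : Integrable (wfun p A B c) := wfun_integrable hp hA hB' hc
  have htot : (∫ y, wfun p A B c y) = up - um := by
    rw [wfun_total hp hA hB' hc]; exact hnorm
  have hiio_ici : (∫ y in Set.Iio x, wfun p A B c y) + (∫ y in Set.Ici x, wfun p A B c y)
      = up - um := by
    rw [intervalIntegral.integral_Iio_add_Ici hint.integrableOn hint.integrableOn, htot]
  refine ⟨?_, ?_, ?_⟩
  · -- x ≤ -r
    intro hx
    rw [hUeq]
    have hz : ∀ y ∈ Set.Iio x, wfun p A B c y = (0:ℝ) := by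
      intro y hy
      apply wfun_zero_of_abs hp hB' hr.le hrc2
      have : y < -r := lt_of_lt_of_le hy hx
      calc r ≤ -y := by linarith
        _ ≤ |y| := neg_le_abs y
    rw [setIntegral_congr_fun measurableSet_Iio hz]
    simp
  · -- middle
    intro hx1 hx2
    have hlow : 0 < ∫ y in Set.Iio x, wfun p A B c y := by
      have hmono : (∫ y in Set.Ioo (-r) x, wfun p A B c y)
          ≤ ∫ y in Set.Iio x, wfun p A B c y := by
        apply setIntegral_mono_set hint.integrableOn
          (Filter.Eventually.of_forall (wfun_nonneg hc.le))
        exact HasSubset.Subset.eventuallyLE (fun y hy => hy.2)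
      have hpos : 0 < ∫ y in Set.Ioo (-r) x, wfun p A B c y := by
        rw [← integral_Ioc_eq_integral_Ioo, ← intervalIntegral.integral_of_le (by linarith)]
        apply intervalIntegral.intervalIntegral_pos_of_pos_on
          hint.intervalIntegrable
          (fun y hy => wfun_pos_of_abs hp hB' hc hr.le hrc2 hy.1 (lt_trans hy.2 hx2))
          (by linarith)
      linarith
    have hhigh : 0 < ∫ y in Set.Ici x, wfun p A B c y := by
      have hmono : (∫ y in Set.Ioo x r, wfun p A B c y)
          ≤ ∫ y in Set.Ici x, wfun p A B c y := by
        apply setIntegral_mono_set hint.integrableOn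
          (Filter.Eventually.of_forall (wfun_nonneg hc.le))
        exact HasSubset.Subset.eventuallyLE (fun y hy => le_of_lt hy.1)
      have hpos : 0 < ∫ y in Set.Ioo x r, wfun p A B c y := by
        rw [← integral_Ioc_eq_integral_Ioo, ← intervalIntegral.integral_of_le (by linarith)]
        apply intervalIntegral.intervalIntegral_pos_of_pos_on
          hint.intervalIntegrable
          (fun y hy => wfun_pos_of_abs hp hB' hc hr.le hrc2 (lt_trans hx1 hy.1) hy.2)
          (by linarith)
      linarith
    refine ⟨?_, ?_, ?_⟩
    · rw [hUeq]; linarith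
    · rw [hUeq]; linarith
    · -- derivative
      have hFeq : (fun y => Ucw p A B um t y)
          = fun z => (um + ∫ y in Set.Iic (0:ℝ), wfun p A B c y)
            + ∫ y in (0:ℝ)..z, wfun p A B c y := by
        funext z
        rw [hUeq]
        have := intervalIntegral.integral_Iic_sub_Iic (μ := volume)
          (a := (0:ℝ)) (b := z) hint.integrableOn hint.integrableOn
        rw [← integral_Iic_eq_integral_Iio]
        linarith
      have hd : HasDerivAt (fun y => Ucw p A B um t y) (wfun p A B c x) x := by
        rw [hFeq]
        exact (intervalIntegral.integral_hasDerivAt_right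
          hint.intervalIntegrable
          (wfun_cont hp).stronglyMeasurable.stronglyMeasurableAtFilter
          ((wfun_cont hp).continuousAt)).const_add _
      rw [hd.deriv]
      exact wfun_pos_of_abs hp hB' hc hr.le hrc2 hx1 hx2
  · -- r ≤ x
    intro hx
    rw [hUeq]
    have hz : ∀ y ∈ Set.Ici x, wfun p A B c y = (0:ℝ) := by
      intro y hy
      apply wfun_zero_of_abs hp hB' hr.le hrc2
      calc r ≤ y := le_trans hx hy
        _ ≤ |y| := le_abs_self y
    rw [setIntegral_congr_fun measurableSet_Ici hz] at hiio_ici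
    simp at hiio_ici
    linarith
end

section
/- Let q satisfy 1 ≤ q < (p−1)/(p−2) if p > 2, or 1 ≤ q < ∞ if 1 < p ≤ 2. Then there exists a positive constant C (depending only on p, q, A, B) such that ‖∂_x² U(t,·)‖_{L^q(ℝ)} = C·t^{−(2q−1)/((p+1)q)} for all t > 0, where ∂_x² U(t,·) denotes the second spatial derivative, defined for all x with |x| ≠ √(A/B)·t^{1/(p+1)} (hence almost everywhere). Moreover, if 1 < p ≤ 2, there exists a positive constant C′ (depending only on p, A, B) such that the essential supremum of |∂_x² U(t,·)| equals C′·t^{−2/(p+1)} for all t > 0. -/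
open Real MeasureTheory Filter Set
open scoped ENNReal Topology Interval

theorem Real.rpow_le_rpow_add_rpow_of_mem_Icc {a b x : ℝ} (ha : 0 < a) (hx : x ∈ Icc a b)
    (e : ℝ) : x ^ e ≤ a ^ e + b ^ e := by
  have hx0 : 0 < x := ha.trans_le hx.1
  rcases le_or_gt 0 e with he | he
  · exact (rpow_le_rpow hx0.le hx.2 he).trans (le_add_of_nonneg_left (rpow_nonneg ha.le e))
  · exact (rpow_le_rpow_of_nonpos ha hx.1 he.le).trans
      (le_add_of_nonneg_right (rpow_nonneg (ha.le.trans (hx.1.trans hx.2)) e))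

theorem ae_abs_ne (r : ℝ) : ∀ᵐ y : ℝ, |y| ≠ r := by
  refine measure_mono_null (fun y hy => ?_) ((Set.toFinite ({r, -r} : Set ℝ)).measure_zero volume)
  have hyr : |y| = r := not_not.1 hy
  rw [mem_insert_iff, mem_singleton_iff]
  rcases abs_choice y with h | h
  · exact Or.inl (h.symm.trans hyr)
  · exact Or.inr (by linarith)

theorem integrableOn_rpow_sub_abs {r β : ℝ} (hβ : -1 < β) :
    IntegrableOn (fun y => (r - |y|) ^ β) (Ioo (-r) r) := by
  have hsub : Ioo (-r) r ⊆ Ι (-r) r := Ioo_subset_Ioc_self.trans Ioc_subset_uIoc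
  have hleft : IntegrableOn (fun y => (r - y) ^ β) (Ioo (-r) r) := by
    have := (intervalIntegral.intervalIntegrable_rpow' hβ (a := 2 * r) (b := 0)).comp_sub_left r
    rw [show r - 2 * r = -r by ring, sub_zero] at this
    exact this.def'.mono_set hsub
  have hright : IntegrableOn (fun y => (r + y) ^ β) (Ioo (-r) r) := by
    have := (intervalIntegral.intervalIntegrable_rpow' hβ (a := 0) (b := 2 * r)).comp_add_left r
    rw [show 0 - r = -r by ring, show 2 * r - r = r by ring] at this
    exact this.def'.mono_set hsub
  have hmeas : Measurable fun y : ℝ => (r - |y|) ^ β := by fun_prop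
  refine (hleft.add hright).mono' hmeas.aestronglyMeasurable
    (ae_restrict_of_forall_mem measurableSet_Ioo fun y hy => ?_)
  have hpos : 0 < r - |y| := sub_pos.2 (abs_lt.2 hy)
  rw [norm_of_nonneg (rpow_nonneg hpos.le β), Pi.add_apply]
  rcases abs_choice y with h | h <;> rw [h]
  · exact le_add_of_nonneg_right (rpow_nonneg (show 0 ≤ r + y by linarith [hy.1]) β)
  · rw [sub_neg_eq_add]
    exact le_add_of_nonneg_left (rpow_nonneg (show 0 ≤ r - y by linarith [hy.2]) β)

theorem eLpNorm_comp_mul_left {E : Type*} [NormedAddCommGroup E] {f : ℝ → E}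
    (hf : AEStronglyMeasurable f volume) {c : ℝ} (hc : c ≠ 0) (e : ℝ≥0∞) :
    eLpNorm (fun x => f (c * x)) e volume
      = ENNReal.ofReal |c⁻¹| ^ (1 / e).toReal * eLpNorm f e volume := by
  have hmap := Real.map_volume_mul_left hc
  have hf' : AEStronglyMeasurable f (Measure.map (c * ·) volume) := by
    rw [hmap]; exact hf.smul_measure _
  rw [show (fun x => f (c * x)) = f ∘ (c * ·) from rfl,
    ← eLpNorm_map_measure hf' (measurable_const_mul c).aemeasurable, hmap,
    eLpNorm_smul_measure_of_ne_zero (by simpa using hc), smul_eq_mul]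

noncomputable def barenblatt (A B m y : ℝ) : ℝ := max (A - B * y ^ 2) 0 ^ m

section Barenblatt

variable {A B r m y : ℝ}

theorem hasDerivAt_barenblatt (hy : B * y ^ 2 < A) :
    HasDerivAt (barenblatt A B m) (-(2 * B * y) * m * (A - B * y ^ 2) ^ (m - 1)) y := by
  have hinside : barenblatt A B m =ᶠ[𝓝 y] fun z => (A - B * z ^ 2) ^ m := by
    have hcont : Continuous fun z : ℝ => B * z ^ 2 := by fun_prop
    filter_upwards [hcont.continuousAt.eventually_lt continuousAt_const hy] with z hz
    rw [barenblatt, max_eq_left (sub_nonneg.2 (le_of_lt hz))]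
  have hpoly : HasDerivAt (fun z => A - B * z ^ 2) (-(2 * B * y)) y :=
    (((hasDerivAt_pow 2 y).const_mul B).const_sub A).congr_deriv (by push_cast; ring)
  exact (hpoly.rpow_const (Or.inl (sub_pos.2 hy).ne')).congr_of_eventuallyEq hinside

theorem deriv_barenblatt_of_lt_abs (hB : 0 < B) (hr : 0 ≤ r) (hA : A = B * r ^ 2) (hm : m ≠ 0)
    (hy : r < |y|) : deriv (barenblatt A B m) y = 0 := by
  have hlt : A < B * y ^ 2 := by
    rw [hA, ← sq_abs y]
    exact mul_lt_mul_of_pos_left (pow_lt_pow_left₀ hy hr two_ne_zero) hB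
  have houtside : barenblatt A B m =ᶠ[𝓝 y] fun _ => 0 := by
    have hcont : Continuous fun z : ℝ => B * z ^ 2 := by fun_prop
    filter_upwards [continuousAt_const.eventually_lt hcont.continuousAt hlt] with z hz
    rw [barenblatt, max_eq_right (sub_nonpos.2 (le_of_lt hz)), zero_rpow hm]
  rw [houtside.deriv_eq, deriv_const]

theorem abs_deriv_barenblatt_le (hB : 0 < B) (hr : 0 < r) (hA : A = B * r ^ 2) (hm : 0 < m) :
    ∃ K, 0 ≤ K ∧ ∀ y, |y| < r → |deriv (barenblatt A B m) y| ≤ K * (r - |y|) ^ (m - 1) := by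
  refine ⟨2 * B * r * m * ((B * r) ^ (m - 1) + (B * (2 * r)) ^ (m - 1)), by positivity,
    fun y hy => ?_⟩
  have hgap : 0 < r - |y| := sub_pos.2 hy
  -- `A - B y² = B (r + |y|) (r - |y|)`, and the first factor stays between `B r` and `2 B r`.
  have hfactor : A - B * y ^ 2 = B * (r + |y|) * (r - |y|) := by rw [hA, ← sq_abs y]; ring
  have hnear : B * (r + |y|) ∈ Icc (B * r) (B * (2 * r)) :=
    ⟨by nlinarith [abs_nonneg y], by nlinarith⟩
  have hinside : B * y ^ 2 < A := by
    have : 0 < B * (r + |y|) * (r - |y|) := by positivity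
    linarith
  have hpow : 0 ≤ (B * (r + |y|)) ^ (m - 1) * (r - |y|) ^ (m - 1) :=
    mul_nonneg (rpow_nonneg (by positivity) _) (rpow_nonneg hgap.le _)
  rw [(hasDerivAt_barenblatt hinside).deriv, hfactor, mul_rpow (by positivity) hgap.le]
  calc |-(2 * B * y) * m * ((B * (r + |y|)) ^ (m - 1) * (r - |y|) ^ (m - 1))|
      = 2 * B * |y| * m * ((B * (r + |y|)) ^ (m - 1) * (r - |y|) ^ (m - 1)) := by
        rw [abs_mul, abs_mul, abs_neg, abs_mul, abs_mul, abs_two, abs_of_pos hB, abs_of_pos hm,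
          abs_of_nonneg hpow]
    _ ≤ 2 * B * r * m *
          (((B * r) ^ (m - 1) + (B * (2 * r)) ^ (m - 1)) * (r - |y|) ^ (m - 1)) := by
        gcongr
        exact rpow_le_rpow_add_rpow_of_mem_Icc (by positivity) hnear _
    _ = _ := by ring

theorem deriv_barenblatt_not_ae_eq_zero (hB : 0 < B) (hr : 0 < r) (hA : A = B * r ^ 2)
    (hm : m ≠ 0) : ¬ deriv (barenblatt A B m) =ᵐ[volume] 0 := by
  intro hzero
  have hsub : Ioo 0 r ⊆ {y | deriv (barenblatt A B m) y ≠ 0} := by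
    intro y ⟨hy0, hyr⟩
    have hinside : B * y ^ 2 < A := by rw [hA]; gcongr
    rw [mem_ofPred_eq, (hasDerivAt_barenblatt hinside).deriv]
    have := rpow_pos_of_pos (sub_pos.2 hinside) (m - 1)
    exact mul_ne_zero (mul_ne_zero (by simp [hB.ne', hy0.ne']) hm) this.ne'
  have := measure_mono_null hsub (ae_iff.1 hzero)
  rw [Real.volume_Ioo, sub_zero, ENNReal.ofReal_eq_zero] at this
  linarith

theorem memLp_deriv_barenblatt (hB : 0 < B) (hr : 0 < r) (hA : A = B * r ^ 2) (hm : 0 < m)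
    {q : ℝ} (hq : 0 < q) (hβ : -1 < (m - 1) * q) :
    MemLp (deriv (barenblatt A B m)) (ENNReal.ofReal q) volume := by
  obtain ⟨K, hK, hbound⟩ := abs_deriv_barenblatt_le hB hr hA hm
  have hmeas := measurable_deriv (barenblatt A B m)
  rw [← integrable_norm_rpow_iff hmeas.aestronglyMeasurable (by simpa using hq)
    ENNReal.ofReal_ne_top, ENNReal.toReal_ofReal hq.le]
  refine Integrable.mono'
    (IntegrableOn.integrable_indicator
      ((integrableOn_rpow_sub_abs (r := r) hβ).const_mul (K ^ q)) measurableSet_Ioo)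
    (hmeas.norm.pow_const q).aestronglyMeasurable ?_
  filter_upwards [ae_abs_ne r] with y hy
  rw [norm_of_nonneg (by positivity)]
  rcases hy.lt_or_gt with hlt | hgt
  · have hgap : 0 ≤ r - |y| := (sub_pos.2 hlt).le
    rw [indicator_of_mem (show y ∈ Ioo (-r) r from abs_lt.1 hlt), rpow_mul hgap,
      ← mul_rpow hK (rpow_nonneg hgap _)]
    exact rpow_le_rpow (norm_nonneg _) (hbound y hlt) hq.le
  · rw [deriv_barenblatt_of_lt_abs hB hr.le hA hm.ne' hgt, norm_zero, zero_rpow hq.ne',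
      indicator_of_notMem (show y ∉ Ioo (-r) r from fun h => (abs_lt.2 h).not_gt hgt)]

theorem memLp_top_deriv_barenblatt (hB : 0 < B) (hr : 0 < r) (hA : A = B * r ^ 2) (hm : 1 ≤ m) :
    MemLp (deriv (barenblatt A B m)) ⊤ volume := by
  obtain ⟨K, hK, hbound⟩ := abs_deriv_barenblatt_le hB hr hA (by linarith)
  refine memLp_top_of_bound (measurable_deriv _).aestronglyMeasurable (K * r ^ (m - 1)) ?_
  filter_upwards [ae_abs_ne r] with y hy
  rcases hy.lt_or_gt with hlt | hgt
  · refine (hbound y hlt).trans (mul_le_mul_of_nonneg_left ?_ hK)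
    exact rpow_le_rpow (sub_pos.2 hlt).le (by linarith [abs_nonneg y]) (by linarith)
  · rw [deriv_barenblatt_of_lt_abs hB hr.le hA (by linarith) hgt, norm_zero]
    positivity

end Barenblatt

theorem vfun_eq_mul_barenblatt (p A B t : ℝ) :
    vfun p A B t = fun x => t ^ (-1 / (p + 1)) *
      barenblatt A B (1 / (p - 1)) (t ^ (-1 / (p + 1)) * x) := by
  funext x
  simp only [vfun, barenblatt, mul_comm x]

theorem deriv_vfun (p A B t x : ℝ) :
    deriv (vfun p A B t) x = (t ^ (-1 / (p + 1))) ^ 2 *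
      deriv (barenblatt A B (1 / (p - 1))) (t ^ (-1 / (p + 1)) * x) := by
  rw [vfun_eq_mul_barenblatt, deriv_const_mul_field, deriv_comp_mul_left, smul_eq_mul]
  ring

section SelfSimilarity

variable {p A B t : ℝ}

theorem eLpNorm_deriv_vfun (ht : 0 < t) (e : ℝ≥0∞) :
    eLpNorm (deriv (vfun p A B t)) e volume
      = ENNReal.ofReal (t ^ (-(2 - (1 / e).toReal) / (p + 1)))
        * eLpNorm (deriv (barenblatt A B (1 / (p - 1)))) e volume := by
  set s := t ^ (-1 / (p + 1)) with hs
  have hs0 : 0 < s := rpow_pos_of_pos ht _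
  have hscale : s ^ 2 * |s⁻¹| ^ (1 / e).toReal = t ^ (-(2 - (1 / e).toReal) / (p + 1)) := by
    rw [abs_of_pos (inv_pos.2 hs0), hs, ← rpow_neg ht.le, ← rpow_natCast, ← rpow_mul ht.le,
      ← rpow_mul ht.le, ← rpow_add ht]
    congr 1
    push_cast
    ring
  set g := deriv (barenblatt A B (1 / (p - 1)))
  rw [funext (deriv_vfun p A B t), ← hs,
    show (fun x => s ^ 2 * g (s * x)) = s ^ 2 • fun x => g (s * x) from rfl, eLpNorm_const_smul,
    eLpNorm_comp_mul_left (measurable_deriv _).aestronglyMeasurable hs0.ne',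
    ← mul_assoc, ← hscale, ENNReal.ofReal_mul (by positivity),
    ← ENNReal.ofReal_rpow_of_nonneg (abs_nonneg _) ENNReal.toReal_nonneg,
    Real.enorm_of_nonneg (by positivity)]

theorem exists_eLpNorm_deriv_vfun_eq {e : ℝ≥0∞} (he : e ≠ 0)
    (hmem : MemLp (deriv (barenblatt A B (1 / (p - 1)))) e volume)
    (hne : ¬ deriv (barenblatt A B (1 / (p - 1))) =ᵐ[volume] 0) :
    ∃ C, 0 < C ∧ ∀ t : ℝ, 0 < t → eLpNorm (deriv (vfun p A B t)) e volume
      = ENNReal.ofReal (C * t ^ (-(2 - (1 / e).toReal) / (p + 1))) := by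
  refine ⟨(eLpNorm (deriv (barenblatt A B (1 / (p - 1)))) e volume).toReal,
    ENNReal.toReal_pos ((eLpNorm_eq_zero_iff hmem.1 he).not.2 hne) hmem.eLpNorm_ne_top,
    fun t ht => ?_⟩
  rw [eLpNorm_deriv_vfun ht, mul_comm, ENNReal.ofReal_mul ENNReal.toReal_nonneg,
    ENNReal.ofReal_toReal hmem.eLpNorm_ne_top]

end SelfSimilarity

theorem neg_one_lt_integrability_exponent {p q : ℝ} (hp : 1 < p) (hq : 0 < q)
    (hq2 : 2 < p → q < (p - 1) / (p - 2)) : -1 < (1 / (p - 1) - 1) * q := by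
  have hp1 : 0 < p - 1 := by linarith
  rcases le_or_gt p 2 with hp2 | hp2
  · have : 1 ≤ 1 / (p - 1) := by rw [le_div_iff₀ hp1]; linarith
    nlinarith
  · rw [show (1 / (p - 1) - 1) * q = -(q * (p - 2) / (p - 1)) by field_simp; ring,
      neg_lt_neg_iff, div_lt_one hp1]
    exact (lt_div_iff₀ (by linarith)).1 (hq2 hp2)

theorem stmt_12_general (p μ A B q : ℝ)
    (hp : 1 < p) (hμ : 0 < μ)
    (hB : B = (p - 1) / (2 * μ * p * (p + 1))) (hA : 0 < A)
    (hq1 : 1 ≤ q) (hq2 : 2 < p → q < (p - 1) / (p - 2)) :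
    (∃ C : ℝ, 0 < C ∧ ∀ t : ℝ, 0 < t →
      eLpNorm (fun x => deriv (fun y => vfun p A B t y) x) (ENNReal.ofReal q) volume
        = ENNReal.ofReal (C * t ^ (-(2 * q - 1) / ((p + 1) * q)))) ∧
    (p ≤ 2 → ∃ C' : ℝ, 0 < C' ∧ ∀ t : ℝ, 0 < t →
      eLpNorm (fun x => deriv (fun y => vfun p A B t y) x) ⊤ volume
        = ENNReal.ofReal (C' * t ^ (-(2:ℝ) / (p + 1)))) := by
  have hp0 : 0 < p := by linarith
  have hB0 : 0 < B := hB ▸ div_pos (sub_pos.2 hp) (by positivity)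
  obtain ⟨r, hr, hAr⟩ : ∃ r, 0 < r ∧ A = B * r ^ 2 :=
    ⟨√(A / B), by positivity, by rw [sq_sqrt (by positivity)]; field_simp⟩
  have hm : 0 < 1 / (p - 1) := one_div_pos.2 (sub_pos.2 hp)
  have hq : 0 < q := by linarith
  have hne := deriv_barenblatt_not_ae_eq_zero hB0 hr hAr hm.ne'
  constructor
  · obtain ⟨C, hC, hCt⟩ := exists_eLpNorm_deriv_vfun_eq (by simpa using hq)
      (memLp_deriv_barenblatt hB0 hr hAr hm hq (neg_one_lt_integrability_exponent hp hq hq2)) hne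
    refine ⟨C, hC, fun t ht => ?_⟩
    rw [hCt t ht, one_div, ENNReal.toReal_inv, ENNReal.toReal_ofReal hq.le]
    congr 3
    field_simp
  · intro hp2
    obtain ⟨C, hC, hCt⟩ := exists_eLpNorm_deriv_vfun_eq ENNReal.top_ne_zero
      (memLp_top_deriv_barenblatt hB0 hr hAr (by rw [le_div_iff₀ (by linarith)]; linarith)) hne
    exact ⟨C, hC, fun t ht => by rw [hCt t ht]; norm_num⟩

theorem stmt_12 (p μ um up A B q : ℝ)
    (hp : 1 < p) (hμ : 0 < μ) (hu : um < up)
    (hB : B = (p - 1) / (2 * μ * p * (p + 1))) (hA : 0 < A)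
    (hnorm : 2 * A ^ ((p+1)/(2*(p-1))) * B ^ (-(1:ℝ)/2) *
      (∫ θ in (0:ℝ)..(Real.pi/2), Real.sin θ ^ ((p+1)/(p-1))) = up - um)
    (hq1 : 1 ≤ q) (hq2 : 2 < p → q < (p - 1) / (p - 2)) :
    (∃ C : ℝ, 0 < C ∧ ∀ t : ℝ, 0 < t →
      eLpNorm (fun x => deriv (fun y => vfun p A B t y) x) (ENNReal.ofReal q) volume
        = ENNReal.ofReal (C * t ^ (-(2 * q - 1) / ((p + 1) * q)))) ∧
    (p ≤ 2 → ∃ C' : ℝ, 0 < C' ∧ ∀ t : ℝ, 0 < t →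
      eLpNorm (fun x => deriv (fun y => vfun p A B t y) x) ⊤ volume
        = ENNReal.ofReal (C' * t ^ (-(2:ℝ) / (p + 1)))) :=
  stmt_12_general p μ A B q hp hμ hB hA hq1 hq2
end

section
/- Let p > 1 and q > p−1. There exists a positive constant C_{p,q} such that for every continuously differentiable function v : ℝ → ℝ with v(x) → 0 as |x| → ∞, with |v|^{2(q−p+1)} integrable on ℝ and |v|^{2(p−1)}(v′)² integrable on ℝ, one has sup_{x∈ℝ} |v(x)| ≤ C_{p,q} ( ∫_ℝ |v(x)|^{2(q−p+1)} dx )^{1/(2(q+1))} · ( ∫_ℝ |v(x)|^{2(p−1)} (v′(x))² dx )^{1/(2(q+1))}. -/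
open Real MeasureTheory Filter Set Topology

/-!
Since `v` vanishes at `-∞`, the fundamental theorem of calculus bounds `|v x| ^ (q + 1)` by the
total variation `(q + 1) ∫ |v| ^ q |v'|` of `|v| ^ (q + 1)`. Splitting
`|v| ^ q |v'| = |v| ^ (q - p + 1) · |v| ^ (p - 1) |v'|` and applying Cauchy–Schwarz gives
`|v x| ^ (q + 1) ≤ (q + 1) √A √B` for the two integrals `A`, `B` of the statement; taking
`(q + 1)`-th roots yields the claim with `C = (q + 1) ^ (1 / (q + 1))`.
-/

theorem abs_le_integral_abs_of_hasDerivAt_of_tendsto_atBot {g g' : ℝ → ℝ}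
    (hderiv : ∀ x, HasDerivAt g (g' x) x) (hg' : Integrable g')
    (hbot : Tendsto g atBot (𝓝 0)) (x : ℝ) : |g x| ≤ ∫ y, |g' y| := by
  have hftc : ∫ y in Iic x, g' y = g x := by
    simpa only [sub_zero] using
      integral_Iic_of_hasDerivAt_of_tendsto' (fun y _ => hderiv y) hg'.integrableOn hbot
  calc |g x| = |∫ y in Iic x, g' y| := by rw [hftc]
    _ ≤ ∫ y in Iic x, |g' y| := abs_integral_le_integral_abs
    _ ≤ ∫ y, |g' y| := setIntegral_le_integral hg'.abs (ae_of_all _ fun _ => abs_nonneg _)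

theorem integral_mul_le_sqrt_integral_sq_mul_sqrt_integral_sq {α : Type*} [MeasurableSpace α]
    {μ : Measure α} {f g : α → ℝ} (hf₀ : 0 ≤ᵐ[μ] f) (hg₀ : 0 ≤ᵐ[μ] g) (hf : MemLp f 2 μ)
    (hg : MemLp g 2 μ) :
    ∫ a, f a * g a ∂μ ≤ √(∫ a, f a ^ 2 ∂μ) * √(∫ a, g a ^ 2 ∂μ) := by
  have h := integral_mul_le_Lp_mul_Lq_of_nonneg HolderConjugate.two_two hf₀ hg₀
    (by simpa using hf) (by simpa using hg)
  simpa only [rpow_two, ← sqrt_eq_rpow] using h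

theorem abs_abs_rpow_sub_two_mul_self (t : ℝ) {s : ℝ} (hs : 1 < s) :
    |(|t| ^ (s - 2) * t)| = |t| ^ (s - 1) := by
  rcases eq_or_ne t 0 with rfl | ht
  · simp [zero_rpow (by linarith : s - 1 ≠ 0)]
  · rw [abs_mul, abs_of_nonneg (rpow_nonneg (abs_nonneg t) _), ← rpow_add_one (abs_ne_zero.2 ht)]
    ring_nf

theorem le_mul_rpow_of_rpow_le_mul_sqrt_mul_sqrt {t c A B s : ℝ} (ht : 0 ≤ t) (hc : 0 ≤ c)
    (hA : 0 ≤ A) (hB : 0 ≤ B) (hs : 0 < s) (h : t ^ s ≤ c * √A * √B) :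
    t ≤ c ^ (1 / s) * A ^ (1 / (2 * s)) * B ^ (1 / (2 * s)) := by
  calc t = (t ^ s) ^ (1 / s) := by rw [one_div, rpow_rpow_inv ht hs.ne']
    _ ≤ (c * √A * √B) ^ (1 / s) := rpow_le_rpow (by positivity) h (by positivity)
    _ = c ^ (1 / s) * A ^ (1 / (2 * s)) * B ^ (1 / (2 * s)) := by
      rw [mul_rpow (by positivity) (by positivity), mul_rpow hc (by positivity), sqrt_eq_rpow,
        sqrt_eq_rpow, ← rpow_mul hA, ← rpow_mul hB]
      ring_nf

theorem abs_rpow_le_mul_sqrt_integral_mul_sqrt_integral {v : ℝ → ℝ} {a b : ℝ} (hab : 0 < a + b)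
    (hv : Differentiable ℝ v) (hbot : Tendsto v atBot (𝓝 0))
    (hA : Integrable (fun y => |v y| ^ (2 * a)))
    (hB : Integrable (fun y => |v y| ^ (2 * b) * deriv v y ^ 2)) (x : ℝ) :
    |v x| ^ (a + b + 1) ≤
      (a + b + 1) * √(∫ y, |v y| ^ (2 * a)) * √(∫ y, |v y| ^ (2 * b) * deriv v y ^ 2) := by
  have hs : 1 < a + b + 1 := by linarith
  have hs₀ : 0 < a + b + 1 := by linarith
  set F : ℝ → ℝ := fun y => |v y| ^ a
  set G : ℝ → ℝ := fun y => |v y| ^ b * |deriv v y|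
  have hF_sq (y : ℝ) : F y ^ 2 = |v y| ^ (2 * a) := by
    rw [← rpow_mul_natCast (abs_nonneg _), mul_comm]
    norm_cast
  have hG_sq (y : ℝ) : G y ^ 2 = |v y| ^ (2 * b) * deriv v y ^ 2 := by
    rw [mul_pow, sq_abs, ← rpow_mul_natCast (abs_nonneg _), mul_comm b]
    norm_cast
  have hFG (y : ℝ) : F y * G y = |v y| ^ (a + b + 1 - 1) * |deriv v y| := by
    rw [add_sub_cancel_right, ← mul_assoc, ← rpow_add' (abs_nonneg _) hab.ne']
  have hv_meas := hv.continuous.measurable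
  have hv'_meas := measurable_deriv v
  have hF : MemLp F 2 := (memLp_two_iff_integrable_sq (by fun_prop)).2 (by simpa only [hF_sq])
  have hG : MemLp G 2 := (memLp_two_iff_integrable_sq (by fun_prop)).2 (by simpa only [hG_sq])
  set g' : ℝ → ℝ := fun y => (a + b + 1) * |v y| ^ (a + b + 1 - 2) * v y * deriv v y
  have hg' (y : ℝ) : HasDerivAt (fun z => |v z| ^ (a + b + 1)) (g' y) y :=
    (hasDerivAt_abs_rpow (v y) hs).comp y (hv y).hasDerivAt
  have hg'_abs (y : ℝ) : |g' y| = (a + b + 1) * (F y * G y) := by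
    rw [abs_mul, mul_assoc (a + b + 1), abs_mul, abs_abs_rpow_sub_two_mul_self _ hs,
      abs_of_pos hs₀, hFG, mul_assoc]
  have hg'_int : Integrable g' :=
    ((hF.integrable_mul hG).const_mul (a + b + 1)).mono' (by fun_prop)
      (ae_of_all _ fun y => by simp only [norm_eq_abs, hg'_abs, Pi.mul_apply, le_refl])
  have hg_bot : Tendsto (fun z => |v z| ^ (a + b + 1)) atBot (𝓝 0) := by
    simpa only [abs_zero, zero_rpow hs₀.ne'] using hbot.abs.rpow_const (Or.inr hs₀.le)
  calc |v x| ^ (a + b + 1) = |(|v x| ^ (a + b + 1))| := (abs_of_nonneg (by positivity)).symm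
    _ ≤ ∫ y, |g' y| := abs_le_integral_abs_of_hasDerivAt_of_tendsto_atBot hg' hg'_int hg_bot x
    _ = (a + b + 1) * ∫ y, F y * G y := by simp only [hg'_abs, integral_const_mul]
    _ ≤ (a + b + 1) * (√(∫ y, F y ^ 2) * √(∫ y, G y ^ 2)) := by
      gcongr
      exact integral_mul_le_sqrt_integral_sq_mul_sqrt_integral_sq
        (ae_of_all _ fun _ => by positivity) (ae_of_all _ fun _ => by positivity) hF hG
    _ = _ := by simp only [hF_sq, hG_sq, mul_assoc]

theorem stmt_15 (p q : ℝ) (hp : 1 < p) (hq : p - 1 < q) :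
    ∃ C : ℝ, 0 < C ∧ ∀ v : ℝ → ℝ, ContDiff ℝ 1 v →
      Tendsto v (Filter.cocompact ℝ) (nhds 0) →
      Integrable (fun x => |v x| ^ (2 * (q - p + 1))) →
      Integrable (fun x => |v x| ^ (2 * (p - 1)) * (deriv v x) ^ 2) →
      ∀ x : ℝ, |v x| ≤
        C * (∫ y : ℝ, |v y| ^ (2 * (q - p + 1))) ^ (1 / (2 * (q + 1)))
          * (∫ y : ℝ, |v y| ^ (2 * (p - 1)) * (deriv v y) ^ 2) ^ (1 / (2 * (q + 1))) := by
  have hq₀ : 0 < q := by linarith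
  refine ⟨(q + 1) ^ (1 / (q + 1)), by positivity, fun v hv hv₀ hA hB x => ?_⟩
  have key := abs_rpow_le_mul_sqrt_integral_mul_sqrt_integral (by linarith)
    (hv.differentiable one_ne_zero) (hv₀.mono_left atBot_le_cocompact) hA hB x
  rw [show q - p + 1 + (p - 1) = q by ring] at key
  exact le_mul_rpow_of_rpow_le_mul_sqrt_mul_sqrt (abs_nonneg _) (by positivity)
    (integral_nonneg fun _ => by positivity) (integral_nonneg fun _ => by positivity)
    (by positivity) key
end

section
/- Let p > 1 and let φ : ℝ → ℝ be continuously differentiable with φ ∈ L²(ℝ), φ′ ∈ L^{p+1}(ℝ), and φ(x) → 0 as x → −∞. Then sup_{x∈ℝ} |φ(x)| ≤ ((3p+1)/(p+1))^{(p+1)/(3p+1)} · ‖φ‖_{L²(ℝ)}^{2p/(3p+1)} · ‖φ′‖_{L^{p+1}(ℝ)}^{(p+1)/(3p+1)}. -/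
/-!
With `r = (3p+1)/(p+1) > 1`, the function `|φ|^r` is `C¹`, vanishes at `-∞` and has derivative
bounded by `r |φ|^(r-1) |φ'|`, so `|φ x|^r ≤ r ∫ |φ|^(r-1) |φ'|`. The exponent `r` is chosen so that
`(r-1)` times the conjugate exponent `(p+1)/p` of `p+1` is `2`; Hölder's inequality then bounds the
integral by `‖φ‖₂^(2p/(p+1)) ‖φ'‖_{p+1}`, and taking `r`-th roots gives the claim.
-/

open Real MeasureTheory Filter Set Topology

section Holder

variable {α : Type*} [MeasurableSpace α] {μ : Measure α} {f g : α → ℝ}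

theorem memLp_ofReal_of_integrable_abs_rpow {p : ℝ} (hp : 0 < p) (hf : AEStronglyMeasurable f μ)
    (hfi : Integrable (fun x => |f x| ^ p) μ) : MemLp f (ENNReal.ofReal p) μ :=
  (integrable_norm_rpow_iff hf (by simpa using hp) ENNReal.ofReal_ne_top).1 <| by
    simpa [ENNReal.toReal_ofReal hp.le] using hfi

theorem memLp_abs_rpow_of_integrable_abs_rpow_mul {a q : ℝ} (hq : 0 < q)
    (hf : AEStronglyMeasurable f μ) (hfi : Integrable (fun x => |f x| ^ (a * q)) μ) :
    MemLp (fun x => |f x| ^ a) (ENNReal.ofReal q) μ := by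
  refine memLp_ofReal_of_integrable_abs_rpow hq
    (hf.norm.aemeasurable.pow_const a).aestronglyMeasurable ?_
  simpa only [abs_of_nonneg (rpow_nonneg (abs_nonneg _) _), ← rpow_mul (abs_nonneg _)] using hfi

theorem integrable_abs_rpow_mul_abs_of_holderConjugate {a q s : ℝ} (hqs : q.HolderConjugate s)
    (hf : AEStronglyMeasurable f μ) (hg : AEStronglyMeasurable g μ)
    (hfi : Integrable (fun x => |f x| ^ (a * q)) μ) (hgi : Integrable (fun x => |g x| ^ s) μ) :
    Integrable (fun x => |f x| ^ a * |g x|) μ :=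
  have := hqs.ennrealOfReal
  (memLp_abs_rpow_of_integrable_abs_rpow_mul hqs.pos hf hfi).integrable_mul
    (memLp_ofReal_of_integrable_abs_rpow hqs.symm.pos hg hgi).abs

theorem integral_abs_rpow_mul_abs_le_of_holderConjugate {a q s : ℝ} (hqs : q.HolderConjugate s)
    (hf : AEStronglyMeasurable f μ) (hg : AEStronglyMeasurable g μ)
    (hfi : Integrable (fun x => |f x| ^ (a * q)) μ) (hgi : Integrable (fun x => |g x| ^ s) μ) :
    ∫ x, |f x| ^ a * |g x| ∂μ ≤
      (∫ x, |f x| ^ (a * q) ∂μ) ^ (1 / q) * (∫ x, |g x| ^ s ∂μ) ^ (1 / s) := by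
  have := integral_mul_le_Lp_mul_Lq_of_nonneg hqs
    (.of_forall fun x => rpow_nonneg (abs_nonneg (f x)) a) (.of_forall fun x => abs_nonneg (g x))
    (memLp_abs_rpow_of_integrable_abs_rpow_mul hqs.pos hf hfi)
    (memLp_ofReal_of_integrable_abs_rpow hqs.symm.pos hg hgi).abs
  simpa only [← rpow_mul (abs_nonneg _)] using this

end Holder

theorem abs_rpow_le_mul_integral_of_tendsto_atBot {f : ℝ → ℝ} (hf : ContDiff ℝ 1 f) {r : ℝ}
    (hr : 1 < r) (hlim : Tendsto f atBot (𝓝 0))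
    (hint : Integrable (fun y => |f y| ^ (r - 1) * |deriv f y|)) (x : ℝ) :
    |f x| ^ r ≤ r * ∫ y, |f y| ^ (r - 1) * |deriv f y| := by
  set u : ℝ → ℝ := fun y => |f y| ^ r
  have hu : ContDiff ℝ 1 u := by simpa [u, Real.norm_eq_abs] using hf.norm_rpow hr
  have hu' : ∀ y, |deriv u y| ≤ r * (|f y| ^ (r - 1) * |deriv f y|) := fun y => by
    have := norm_fderiv_norm_rpow_le (hf.differentiable one_ne_zero) (x := y) hr
    simpa [u, ← norm_deriv_eq_norm_fderiv, mul_assoc] using this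
  have hu'_int : Integrable (deriv u) :=
    (hint.const_mul r).mono' (hu.continuous_deriv le_rfl).aestronglyMeasurable (.of_forall hu')
  have hu_lim : Tendsto u atBot (𝓝 0) := by
    have := hlim.abs.rpow_const (p := r) (.inr (by linarith))
    rwa [abs_zero, Real.zero_rpow (zero_lt_one.trans hr).ne'] at this
  have hFTC : ∫ y in Iic x, deriv u y = u x := by
    simpa using integral_Iic_of_hasDerivAt_of_tendsto'
      (fun y _ => (hu.differentiable one_ne_zero y).hasDerivAt) hu'_int.integrableOn hu_lim
  calc |f x| ^ r = ∫ y in Iic x, deriv u y := hFTC.symm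
    _ ≤ ∫ y in Iic x, |deriv u y| :=
      integral_mono hu'_int.integrableOn hu'_int.abs.integrableOn fun y => le_abs_self _
    _ ≤ ∫ y, |deriv u y| := setIntegral_le_integral hu'_int.abs (.of_forall fun y => abs_nonneg _)
    _ ≤ ∫ y, r * (|f y| ^ (r - 1) * |deriv f y|) :=
      integral_mono hu'_int.abs (hint.const_mul r) hu'
    _ = r * ∫ y, |f y| ^ (r - 1) * |deriv f y| := integral_const_mul _ _

theorem rpow_inv_sobolev_bound_eq {p A B : ℝ} (hp : 0 < p) (hA : 0 ≤ A) (hB : 0 ≤ B) :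
    ((3 * p + 1) / (p + 1) * (A ^ (1 / ((p + 1) / p)) * B)) ^ ((3 * p + 1) / (p + 1))⁻¹ =
      ((3 * p + 1) / (p + 1)) ^ ((p + 1) / (3 * p + 1))
        * (A ^ ((1:ℝ) / 2)) ^ ((2 * p) / (3 * p + 1)) * B ^ ((p + 1) / (3 * p + 1)) := by
  have hA' : (A ^ (1 / ((p + 1) / p))) ^ ((3 * p + 1) / (p + 1))⁻¹ =
      (A ^ ((1:ℝ) / 2)) ^ ((2 * p) / (3 * p + 1)) := by
    rw [← rpow_mul hA, ← rpow_mul hA]; congr 1; field_simp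
  rw [mul_rpow (by positivity) (by positivity), mul_rpow (by positivity) hB, hA', inv_div,
    mul_assoc]

theorem stmt_16 (p : ℝ) (hp : 1 < p) (φ : ℝ → ℝ) (hφ : ContDiff ℝ 1 φ)
    (hφ2 : Integrable (fun x => (φ x) ^ 2))
    (hφ' : Integrable (fun x => |deriv φ x| ^ (p + 1)))
    (hlim : Tendsto φ atBot (nhds 0)) :
    ∀ x : ℝ, |φ x| ≤
      ((3 * p + 1) / (p + 1)) ^ ((p + 1) / (3 * p + 1))
        * ((∫ y : ℝ, (φ y) ^ 2) ^ ((1:ℝ)/2)) ^ ((2 * p) / (3 * p + 1))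
        * ((∫ y : ℝ, |deriv φ y| ^ (p + 1)) ^ (1 / (p + 1))) ^ ((p + 1) / (3 * p + 1)) := by
  intro x
  have hp0 : 0 < p := by linarith
  set r := (3 * p + 1) / (p + 1) with hr
  have hr1 : 1 < r := by rw [hr, lt_div_iff₀ (by linarith)]; linarith
  have hqs : ((p + 1) / p).HolderConjugate (p + 1) := by
    rw [Real.holderConjugate_iff, inv_div]
    exact ⟨by rw [lt_div_iff₀ hp0]; linarith, by field_simp⟩
  have hsq : (fun y => |φ y| ^ ((r - 1) * ((p + 1) / p))) = fun y => φ y ^ 2 := by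
    ext y
    rw [show (r - 1) * ((p + 1) / p) = (2 : ℕ) by rw [hr]; field_simp; ring, rpow_natCast, sq_abs]
  have hφm : AEStronglyMeasurable φ := hφ.continuous.aestronglyMeasurable
  have hφ'm : AEStronglyMeasurable (deriv φ) := (hφ.continuous_deriv le_rfl).aestronglyMeasurable
  have hφ2' : Integrable fun y => |φ y| ^ ((r - 1) * ((p + 1) / p)) := hsq ▸ hφ2
  have hpoint := abs_rpow_le_mul_integral_of_tendsto_atBot hφ hr1 hlim
    (integrable_abs_rpow_mul_abs_of_holderConjugate hqs hφm hφ'm hφ2' hφ') x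
  have hHolder := integral_abs_rpow_mul_abs_le_of_holderConjugate hqs hφm hφ'm hφ2' hφ'
  rw [hsq] at hHolder
  have hA : 0 ≤ ∫ y, φ y ^ 2 := integral_nonneg fun y => sq_nonneg _
  have hB : 0 ≤ (∫ y, |deriv φ y| ^ (p + 1)) ^ (1 / (p + 1)) := by positivity
  have hbound : |φ x| ≤ (r * ((∫ y, φ y ^ 2) ^ (1 / ((p + 1) / p))
      * (∫ y, |deriv φ y| ^ (p + 1)) ^ (1 / (p + 1)))) ^ r⁻¹ :=
    (le_rpow_inv_iff_of_pos (abs_nonneg _) (by positivity) (by linarith)).2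
      (hpoint.trans (mul_le_mul_of_nonneg_left hHolder (by linarith)))
  exact hbound.trans_eq (by rw [hr]; exact rpow_inv_sobolev_bound_eq hp0 hA hB)
end

section
/- Let p > 1 and let g : ℝ → ℝ be continuously differentiable with g(x) → 0 as |x| → ∞, and suppose ∫_{{g<0}} |g|^{2(p−1)}(g′)² dx and ∫_{{g<0}} |g|^{p+1} dx are finite, where {g<0} := {x ∈ ℝ : g(x) < 0}. Then ∫_{{g<0}} |g|^{p+2} dx ≤ ((3p+2)/2)^{2/(3p+2)} · ( ∫_{{g<0}} |g|^{2(p−1)}(g′)² dx )^{1/(3p+1)} · ( ∫_{{g<0}} |g|^{p+1} dx )^{(3p+2)/(3p+1)}. -/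
/-!
Put `α = (3p+2)/2` and `F = (g⁻)^α`. Since `α > 1`, `F` is `C¹` with `F' = -α |g|^(α-1) g'` on
`{g < 0}` and `F' = 0` elsewhere, and `F` vanishes at `±∞`; integrating `F'` from either end gives
`F ≤ ½ ∫ |F'|`. Splitting `|g|^(α-1) = |g|^(p-1) · |g|^((p+2)/2)`, Cauchy–Schwarz bounds this by
`K = (α/2) A^(1/2) I^(1/2)`, where `A`, `B`, `I` are the three integrals of the statement. Hence
`|g| ≤ K^(1/α)` on `{g < 0}`, so `I ≤ K^(1/α) B`, which is an inequality `I ≤ c I^(1/(3p+2))`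
that can be solved for `I`; the resulting constant `((3p+2)/4)^(2/(3p+1))` is at most
`((3p+2)/2)^(2/(3p+2))`.
-/

open Real MeasureTheory Filter Set Topology

theorem hasDerivAt_max_neg_zero_rpow {α : ℝ} (hα : 1 < α) (y : ℝ) :
    HasDerivAt (fun y : ℝ => max (-y) 0 ^ α) (-(α * max (-y) 0 ^ (α - 1))) y := by
  have hα0 : α - 1 ≠ 0 := by linarith
  have hneg : ∀ z, HasDerivAt (fun y : ℝ => (-y) ^ α) (α * (-z) ^ (α - 1) * -1) z := fun z =>
    (Real.hasDerivAt_rpow_const (Or.inr hα.le)).comp z (hasDerivAt_neg z)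
  rcases lt_trichotomy y 0 with hy | rfl | hy
  · refine ((hneg y).congr_of_eventuallyEq ?_).congr_deriv ?_
    · filter_upwards [eventually_lt_nhds hy] with z hz
      rw [max_eq_left (by linarith)]
    · rw [max_eq_left (by linarith)]; ring
  · have hl : HasDerivWithinAt (fun y : ℝ => max (-y) 0 ^ α) 0 (Iic 0) 0 :=
      ((hneg 0).hasDerivWithinAt.congr_of_mem (fun z hz => by rw [max_eq_left (by simpa using hz)])
        self_mem_Iic).congr_deriv (by simp [zero_rpow hα0])
    have hr : HasDerivWithinAt (fun y : ℝ => max (-y) 0 ^ α) 0 (Ici 0) 0 :=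
      (hasDerivWithinAt_const 0 (Ici 0) (0 : ℝ)).congr_of_mem
        (fun z hz => by rw [max_eq_right (by simpa using hz), zero_rpow (by linarith)])
        self_mem_Ici
    simpa [zero_rpow hα0, Iic_union_Ici] using hl.union hr
  · refine ((hasDerivAt_const y (0 : ℝ)).congr_of_eventuallyEq ?_).congr_deriv ?_
    · filter_upwards [eventually_gt_nhds hy] with z hz
      rw [max_eq_right (by linarith), zero_rpow (by linarith)]
    · rw [max_eq_right (by linarith), zero_rpow hα0]; ring

theorem abs_le_half_integral_abs_of_hasDerivAt {F F' : ℝ → ℝ} (hF : ∀ x, HasDerivAt F (F' x) x)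
    (hF' : Integrable F') (hbot : Tendsto F atBot (𝓝 0)) (htop : Tendsto F atTop (𝓝 0))
    (a : ℝ) : |F a| ≤ (∫ x, |F' x|) / 2 := by
  have hleft : ∫ x in Iic a, F' x = F a - 0 :=
    integral_Iic_of_hasDerivAt_of_tendsto (hF a).continuousAt.continuousWithinAt
      (fun x _ => hF x) hF'.integrableOn hbot
  have hright : ∫ x in Ioi a, F' x = 0 - F a :=
    integral_Ioi_of_hasDerivAt_of_tendsto (hF a).continuousAt.continuousWithinAt
      (fun x _ => hF x) hF'.integrableOn htop
  have hsplit : (∫ x in Iic a, |F' x|) + ∫ x in Ioi a, |F' x| = ∫ x, |F' x| :=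
    intervalIntegral.integral_Iic_add_Ioi hF'.abs.integrableOn hF'.abs.integrableOn
  have h1 := abs_integral_le_integral_abs (f := F') (μ := volume.restrict (Iic a))
  have h2 := abs_integral_le_integral_abs (f := F') (μ := volume.restrict (Ioi a))
  rw [hleft, sub_zero] at h1
  rw [hright, zero_sub, abs_neg] at h2
  linarith

theorem exists_abs_le_of_tendsto_cocompact {g : ℝ → ℝ} (hg : Continuous g)
    (hlim : Tendsto g (cocompact ℝ) (𝓝 0)) : ∃ M, ∀ x, |g x| ≤ M := by
  obtain ⟨M, hM⟩ := isBounded_iff_forall_norm_le.1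
    (ZeroAtInftyContinuousMap.isBounded_range (⟨⟨g, hg⟩, hlim⟩ : ZeroAtInftyContinuousMap ℝ ℝ))
  exact ⟨M, fun x => hM _ (mem_range_self x)⟩

section WeightedIntegrals

variable {X : Type*} [MeasurableSpace X] {μ : Measure X} {u v : X → ℝ}

theorem integral_mul_le_L2_mul_L2_of_nonneg (hu0 : 0 ≤ᵐ[μ] u) (hv0 : 0 ≤ᵐ[μ] v)
    (hu : MemLp u 2 μ) (hv : MemLp v 2 μ) :
    ∫ x, u x * v x ∂μ ≤ (∫ x, u x ^ 2 ∂μ) ^ (1 / 2 : ℝ) * (∫ x, v x ^ 2 ∂μ) ^ (1 / 2 : ℝ) := by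
  simpa only [rpow_two] using integral_mul_le_Lp_mul_Lq_of_nonneg HolderConjugate.two_two hu0 hv0
    (by simpa using hu) (by simpa using hv)

theorem integrable_rpow_mul_and_integral_le (hu : Measurable u) (hv : Measurable v)
    (hu0 : ∀ x, 0 ≤ u x) {q r : ℝ} (hqr : q + r ≠ 0)
    (h₁ : Integrable (fun x => u x ^ q * v x ^ 2) μ) (h₂ : Integrable (fun x => u x ^ r) μ) :
    Integrable (fun x => u x ^ ((q + r) / 2) * v x) μ ∧
      ∫ x, u x ^ ((q + r) / 2) * |v x| ∂μ ≤
        (∫ x, u x ^ q * v x ^ 2 ∂μ) ^ (1 / 2 : ℝ) * (∫ x, u x ^ r ∂μ) ^ (1 / 2 : ℝ) := by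
  have hsq : ∀ (s : ℝ) x, (u x ^ (s / 2)) ^ 2 = u x ^ s := fun s x => by
    rw [← rpow_natCast, ← rpow_mul (hu0 x)]; norm_num
  have hsplit : ∀ x, u x ^ ((q + r) / 2) = u x ^ (q / 2) * u x ^ (r / 2) := fun x => by
    rw [add_div, rpow_add' (hu0 x) (by rwa [← add_div, div_ne_zero_iff, and_iff_left two_ne_zero])]
  have hf : MemLp (fun x => u x ^ (q / 2) * v x) 2 μ :=
    (memLp_two_iff_integrable_sq ((hu.pow_const _).mul hv).aestronglyMeasurable).2 <| by
      simpa only [Pi.mul_apply, mul_pow, hsq] using h₁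
  have hg : MemLp (fun x => u x ^ (r / 2)) 2 μ :=
    (memLp_two_iff_integrable_sq (hu.pow_const _).aestronglyMeasurable).2 <| by
      simpa only [hsq] using h₂
  refine ⟨?_, ?_⟩
  · refine (hf.integrable_mul hg).congr (.of_forall fun x => ?_)
    simp only [Pi.mul_apply, hsplit]
    ring
  · have := integral_mul_le_L2_mul_L2_of_nonneg
      (.of_forall fun x => abs_nonneg (u x ^ (q / 2) * v x))
      (.of_forall fun x => rpow_nonneg (hu0 x) _) hf.abs hg
    simpa only [hsplit, abs_mul, abs_of_nonneg (rpow_nonneg (hu0 _) _), mul_right_comm, mul_pow,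
      sq_abs, hsq] using this

theorem integrable_rpow_add_one_and_integral_le (hu : Measurable u) (hu0 : ∀ x, 0 ≤ u x)
    {q L : ℝ} (hq : 0 ≤ q) (hL : ∀ᵐ x ∂μ, u x ≤ L) (h : Integrable (fun x => u x ^ q) μ) :
    Integrable (fun x => u x ^ (q + 1)) μ ∧
      ∫ x, u x ^ (q + 1) ∂μ ≤ L * ∫ x, u x ^ q ∂μ := by
  have hsplit : ∀ x, u x ^ (q + 1) = u x ^ q * u x := fun x =>
    rpow_add_one' (hu0 x) (by linarith)
  have hle : ∀ᵐ x ∂μ, u x ^ (q + 1) ≤ L * u x ^ q := by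
    filter_upwards [hL] with x hx
    rw [hsplit, mul_comm]
    exact mul_le_mul_of_nonneg_right hx (rpow_nonneg (hu0 x) q)
  have hint : Integrable (fun x => u x ^ (q + 1)) μ := by
    refine (h.const_mul L).mono (hu.pow_const _).aestronglyMeasurable ?_
    filter_upwards [hle] with x hx
    have h0 : 0 ≤ u x ^ (q + 1) := rpow_nonneg (hu0 x) _
    rw [norm_of_nonneg h0, norm_of_nonneg (h0.trans hx)]
    exact hx
  refine ⟨hint, ?_⟩
  rw [← integral_const_mul]
  exact integral_mono_ae hint (h.const_mul L) hle

end WeightedIntegrals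

theorem abs_rpow_le_half_mul_setIntegral_of_neg {α : ℝ} (hα : 1 < α) {g : ℝ → ℝ}
    (hg : Differentiable ℝ g) (hlim : Tendsto g (cocompact ℝ) (𝓝 0))
    (hint : IntegrableOn (fun x => |g x| ^ (α - 1) * deriv g x) {x | g x < 0})
    {a : ℝ} (ha : g a < 0) :
    |g a| ^ α ≤ α / 2 * ∫ x in {x | g x < 0}, |g x| ^ (α - 1) * |deriv g x| := by
  set S := {x | g x < 0}
  have hS : MeasurableSet S := measurableSet_lt hg.continuous.measurable measurable_const
  set F := fun x => max (-g x) 0 ^ α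
  set F' := S.indicator fun x => -α * (|g x| ^ (α - 1) * deriv g x)
  have hF : ∀ x, HasDerivAt F (F' x) x := by
    intro x
    refine ((hasDerivAt_max_neg_zero_rpow hα (g x)).comp x (hg x).hasDerivAt).congr_deriv ?_
    simp only [F', S, indicator_apply, mem_ofPred_eq]
    split_ifs with hx
    · rw [max_eq_left (by linarith), abs_of_neg hx]; ring
    · rw [max_eq_right (by linarith), zero_rpow (by linarith)]; ring
  have hFlim : Tendsto F (cocompact ℝ) (𝓝 0) := by
    have hφ : Continuous fun y : ℝ => max (-y) 0 ^ α :=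
      (continuous_neg.max continuous_const).rpow_const fun _ => Or.inr (by linarith)
    exact (hφ.tendsto' 0 0 (by simp [zero_rpow (by linarith : α ≠ 0)])).comp hlim
  rw [cocompact_eq_atBot_atTop, tendsto_sup] at hFlim
  have key := abs_le_half_integral_abs_of_hasDerivAt hF
    ((integrable_indicator_iff hS).2 (hint.const_mul (-α))) hFlim.1 hFlim.2 a
  have hFa : |F a| = |g a| ^ α := by
    rw [abs_of_nonneg (rpow_nonneg (le_max_right _ _) _), max_eq_left (by linarith), abs_of_neg ha]
  have hF'int : ∫ x, |F' x| = α * ∫ x in S, |g x| ^ (α - 1) * |deriv g x| := by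
    simp_rw [F', ← norm_eq_abs, norm_indicator_eq_indicator_norm]
    rw [integral_indicator hS, ← integral_const_mul]
    refine setIntegral_congr_fun hS fun x _ => ?_
    simp only [norm_eq_abs, abs_mul, abs_neg, abs_of_pos (by linarith : 0 < α),
      abs_of_nonneg (rpow_nonneg (abs_nonneg (g x)) _)]
  rw [hFa, hF'int] at key
  linarith

theorem le_rpow_of_le_mul_rpow {I c θ : ℝ} (hI : 0 ≤ I) (hc : 0 ≤ c) (hθ : θ < 1)
    (h : I ≤ c * I ^ θ) : I ≤ c ^ (1 - θ)⁻¹ := by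
  rcases hI.eq_or_lt with rfl | hIpos
  · positivity
  have hθ' : 0 < 1 - θ := by linarith
  rw [le_rpow_inv_iff_of_pos hI hc hθ', rpow_sub hIpos, rpow_one, div_le_iff₀ (by positivity)]
  exact h

theorem rpow_div_four_le_rpow_div_two {t : ℝ} (ht : 5 ≤ t) :
    (t / 4) ^ (2 / (t - 1)) ≤ (t / 2) ^ (2 / t) := by
  have h4 : 0 < t / 4 := by linarith
  have h2 : 0 < t / 2 := by linarith
  rw [← log_le_log_iff (by positivity) (by positivity), log_rpow h4, log_rpow h2,
    show t / 4 = t / 2 / 2 by ring, log_div h2.ne' two_ne_zero,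
    div_mul_eq_mul_div, div_mul_eq_mul_div, div_le_div_iff₀ (by linarith) (by linarith)]
  -- `log (t/2) ≤ t/2 - 1 < t log 2` is all that is needed
  have hlog : log (t / 2) ≤ t * log 2 := by
    nlinarith [log_le_sub_one_of_pos h2, log_two_gt_d9]
  nlinarith [log_two_gt_d9]

theorem le_mul_rpow_mul_rpow_of_le_rpow_mul {t A B I K : ℝ} (ht : 5 ≤ t) (hA : 0 ≤ A)
    (hB : 0 ≤ B) (hI : 0 ≤ I) (hK : 0 ≤ K) (hIK : I ≤ K ^ (2 / t) * B)
    (hKA : K ≤ t / 4 * (A ^ (1 / 2 : ℝ) * I ^ (1 / 2 : ℝ))) :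
    I ≤ (t / 2) ^ (2 / t) * A ^ (1 / (t - 1)) * B ^ (t / (t - 1)) := by
  have ht0 : 0 < t := by linarith
  have hc : 0 ≤ (t / 4) ^ (2 / t) * A ^ (1 / t) * B := by positivity
  have hKpow : K ^ (2 / t) ≤ (t / 4) ^ (2 / t) * A ^ (1 / t) * I ^ (1 / t) := by
    calc K ^ (2 / t) ≤ (t / 4 * (A ^ (1 / 2 : ℝ) * I ^ (1 / 2 : ℝ))) ^ (2 / t) :=
          rpow_le_rpow hK hKA (by positivity)
      _ = _ := by
        rw [mul_rpow (by positivity) (by positivity), mul_rpow (by positivity) (by positivity),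
          ← rpow_mul hA, ← rpow_mul hI, mul_assoc]
        field_simp
  have habsorb : I ≤ ((t / 4) ^ (2 / t) * A ^ (1 / t) * B) ^ (1 - 1 / t)⁻¹ := by
    refine le_rpow_of_le_mul_rpow hI hc (by rw [div_lt_one ht0]; linarith) ?_
    calc I ≤ K ^ (2 / t) * B := hIK
      _ ≤ (t / 4) ^ (2 / t) * A ^ (1 / t) * I ^ (1 / t) * B := by gcongr
      _ = _ := by ring
  have hexp : (1 - 1 / t)⁻¹ = t / (t - 1) := by field_simp
  calc I ≤ _ := habsorb
    _ = (t / 4) ^ (2 / (t - 1)) * A ^ (1 / (t - 1)) * B ^ (t / (t - 1)) := by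
      rw [hexp, mul_rpow (by positivity) hB, mul_rpow (by positivity) (by positivity),
        ← rpow_mul (by positivity), ← rpow_mul hA]
      field_simp
    _ ≤ _ := by gcongr; exact rpow_div_four_le_rpow_div_two ht

theorem stmt_19 (p : ℝ) (hp : 1 < p) (g : ℝ → ℝ) (hg : ContDiff ℝ 1 g)
    (hlim : Tendsto g (Filter.cocompact ℝ) (nhds 0))
    (hint1 : IntegrableOn (fun x => |g x| ^ (2 * (p - 1)) * (deriv g x) ^ 2)
      {x : ℝ | g x < 0})
    (hint2 : IntegrableOn (fun x => |g x| ^ (p + 1)) {x : ℝ | g x < 0}) :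
    (∫ x in {x : ℝ | g x < 0}, |g x| ^ (p + 2)) ≤
      ((3 * p + 2) / 2) ^ (2 / (3 * p + 2))
        * (∫ x in {x : ℝ | g x < 0}, |g x| ^ (2 * (p - 1)) * (deriv g x) ^ 2)
            ^ (1 / (3 * p + 1))
        * (∫ x in {x : ℝ | g x < 0}, |g x| ^ (p + 1)) ^ ((3 * p + 2) / (3 * p + 1)) := by
  set S := {x : ℝ | g x < 0}
  have hgd : Differentiable ℝ g := hg.differentiable one_ne_zero
  have hS : MeasurableSet S := measurableSet_lt hgd.continuous.measurable measurable_const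
  have hu : Measurable fun x => |g x| := hgd.continuous.measurable.abs
  have hp2 : p + 2 = p + 1 + 1 := by ring
  obtain ⟨M, hM⟩ := exists_abs_le_of_tendsto_cocompact hgd.continuous hlim
  have hint3 : IntegrableOn (fun x => |g x| ^ (p + 2)) S := by
    rw [hp2]
    exact (integrable_rpow_add_one_and_integral_le hu (fun x => abs_nonneg (g x))
      (by linarith) (.of_forall hM) hint2).1
  obtain ⟨hintJ, hJ⟩ := integrable_rpow_mul_and_integral_le hu (measurable_deriv g)
    (fun x => abs_nonneg (g x)) (by linarith) hint1 hint3
  set J := ∫ x in S, |g x| ^ ((2 * (p - 1) + (p + 2)) / 2) * |deriv g x|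
  have hsup : ∀ a ∈ S, |g a| ≤ ((3 * p + 2) / 4 * J) ^ (2 / (3 * p + 2)) := by
    intro a ha
    have hα : (3 * p + 2) / 2 - 1 = (2 * (p - 1) + (p + 2)) / 2 := by ring
    have := abs_rpow_le_half_mul_setIntegral_of_neg (α := (3 * p + 2) / 2) (by linarith) hgd
      hlim (by rw [hα]; exact hintJ) ha
    rw [hα, div_div, show (2 : ℝ) * 2 = 4 by norm_num] at this
    rwa [← inv_div (3 * p + 2),
      le_rpow_inv_iff_of_pos (abs_nonneg _) (by positivity) (by positivity)]
  have hI := (integrable_rpow_add_one_and_integral_le hu (fun x => abs_nonneg (g x))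
      (by linarith) (ae_restrict_of_forall_mem hS hsup) hint2).2
  rw [← hp2] at hI
  rw [show 3 * p + 1 = 3 * p + 2 - 1 by ring]
  exact le_mul_rpow_mul_rpow_of_le_rpow_mul (by linarith)
    (setIntegral_nonneg hS fun x _ => by positivity)
    (setIntegral_nonneg hS fun x _ => by positivity)
    (setIntegral_nonneg hS fun x _ => by positivity) (by positivity) hI
    (mul_le_mul_of_nonneg_left hJ (by positivity))
end
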